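/- arXiv:2110.11786 — 7 statements merged into one kernel-verified Lean document; each statement's English description precedes it below -/
import Mathlib

section
/- Let T : ℓ¹ → ℓ¹ be a surjective linear isometry and let x, y ∈ ℓ¹ have disjoint supports. Then Tx and Ty have disjoint supports. -/
/-!
In `ℓ¹`, disjointness of supports is a metric property: pointwise
`‖a + b‖ + ‖a - b‖ ≤ 2‖a‖ + 2‖b‖`, and in a strictly convex space equality forces `a = 0` or
`b = 0`, since it needs both `a, b` and `a, -b` on a common ray. Summing, `x` and `y` have
disjoint supports iff `‖x + y‖ + ‖x - y‖ = 2‖x‖ + 2‖y‖`, an identity that a linear isometry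
preserves.
-/

theorem Summable.tsum_eq_tsum_iff_of_le {ι α : Type*} [AddCommGroup α] [PartialOrder α]
    [IsOrderedAddMonoid α] [TopologicalSpace α] [IsTopologicalAddGroup α] [OrderClosedTopology α]
    {f g : ι → α} (hf : Summable f) (hg : Summable g) (hfg : f ≤ g) :
    ∑' i, f i = ∑' i, g i ↔ f = g := by
  have hsub : HasSum (g - f) (∑' i, g i - ∑' i, f i) := hg.hasSum.sub hf.hasSum
  have hzero : HasSum (g - f) 0 ↔ g - f = 0 :=
    hasSum_zero_iff_of_nonneg fun i => sub_nonneg.2 (hfg i)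
  rw [eq_comm, ← sub_eq_zero, eq_comm (a := f), ← sub_eq_zero (a := g), ← hzero]
  exact ⟨fun h => h ▸ hsub, hsub.unique⟩

section NormAddSub

variable {E : Type*} [NormedAddCommGroup E]

theorem norm_add_add_norm_sub_le (a b : E) : ‖a + b‖ + ‖a - b‖ ≤ 2 * ‖a‖ + 2 * ‖b‖ := by
  linarith [norm_add_le a b, norm_sub_le a b]

variable [NormedSpace ℝ E] [StrictConvexSpace ℝ E]

theorem norm_add_add_norm_sub_lt {a b : E} (ha : a ≠ 0) (hb : b ≠ 0) :
    ‖a + b‖ + ‖a - b‖ < 2 * ‖a‖ + 2 * ‖b‖ := by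
  by_cases hab : SameRay ℝ a b
  · have hab' : ¬SameRay ℝ a (-b) := fun h =>
      hb (eq_zero_of_sameRay_self_neg (hab.symm.trans h fun h0 => absurd h0 ha))
    have := norm_add_lt_of_not_sameRay hab'
    rw [← sub_eq_add_neg, norm_neg] at this
    linarith [norm_add_le a b]
  · linarith [norm_add_lt_of_not_sameRay hab, norm_sub_le a b]

theorem norm_add_add_norm_sub_eq_iff {a b : E} :
    ‖a + b‖ + ‖a - b‖ = 2 * ‖a‖ + 2 * ‖b‖ ↔ a = 0 ∨ b = 0 := by
  refine ⟨fun h => ?_, ?_⟩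
  · by_contra! hab
    exact (norm_add_add_norm_sub_lt hab.1 hab.2).ne h
  · rintro (rfl | rfl) <;> simp <;> ring

end NormAddSub

namespace lp

variable {ι : Type*} {E : ι → Type*} [∀ i, NormedAddCommGroup (E i)]

theorem norm_eq_tsum_norm (f : lp E 1) : ‖f‖ = ∑' i, ‖f i‖ := by
  simpa using norm_eq_tsum_rpow (p := 1) (by norm_num) f

theorem summable_norm (f : lp E 1) : Summable fun i => ‖f i‖ := by
  simpa using (lp.memℓp f).summable (p := 1) (by norm_num)

variable [∀ i, NormedSpace ℝ (E i)] [∀ i, StrictConvexSpace ℝ (E i)]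

theorem disjoint_support_iff_norm_add_add_norm_sub_eq (x y : lp E 1) :
    Disjoint {i | x i ≠ 0} {i | y i ≠ 0} ↔ ‖x + y‖ + ‖x - y‖ = 2 * ‖x‖ + 2 * ‖y‖ := by
  have hsum_left := (summable_norm (x + y)).add (summable_norm (x - y))
  have hsum_right := ((summable_norm x).mul_left 2).add ((summable_norm y).mul_left 2)
  rw [norm_eq_tsum_norm, norm_eq_tsum_norm, norm_eq_tsum_norm x, norm_eq_tsum_norm y,
    ← tsum_mul_left, ← tsum_mul_left, ← (summable_norm _).tsum_add (summable_norm _),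
    ← ((summable_norm x).mul_left 2).tsum_add ((summable_norm y).mul_left 2),
    hsum_left.tsum_eq_tsum_iff_of_le hsum_right fun i => norm_add_add_norm_sub_le (x i) (y i),
    funext_iff]
  simp only [Set.disjoint_left, Set.mem_ofPred_eq, ← or_iff_not_imp_left, not_not, coeFn_add,
    coeFn_sub, Pi.add_apply, Pi.sub_apply, norm_add_add_norm_sub_eq_iff]

end lp

theorem ell1_isometry_disjoint_support_general
    (T : lp (fun _ : ℕ => ℝ) 1 →ₗ[ℝ] lp (fun _ : ℕ => ℝ) 1)
    (hiso : Isometry T)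
    (x y : lp (fun _ : ℕ => ℝ) 1)
    (hxy : Disjoint {i | x i ≠ 0} {i | y i ≠ 0}) :
    Disjoint {i | (T x) i ≠ 0} {i | (T y) i ≠ 0} := by
  have hnorm (z : lp (fun _ : ℕ => ℝ) 1) : ‖T z‖ = ‖z‖ :=
    hiso.norm_map_of_map_zero (map_zero T) z
  rw [lp.disjoint_support_iff_norm_add_add_norm_sub_eq] at hxy ⊢
  rwa [← map_add, ← map_sub, hnorm, hnorm, hnorm, hnorm]

/-- A surjective linear isometry of `ℓ¹` maps disjointly supported vectors to
disjointly supported vectors. -/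
theorem ell1_isometry_disjoint_support
    (T : lp (fun _ : ℕ => ℝ) 1 →ₗ[ℝ] lp (fun _ : ℕ => ℝ) 1)
    (hiso : Isometry T) (hsurj : Function.Surjective T)
    (x y : lp (fun _ : ℕ => ℝ) 1)
    (hxy : Disjoint {i | x i ≠ 0} {i | y i ≠ 0}) :
    Disjoint {i | (T x) i ≠ 0} {i | (T y) i ≠ 0} :=
  ell1_isometry_disjoint_support_general T hiso x y hxy
end

section
/- Let 1 ≤ p < ∞ with p ≠ 2 and let T : ℓᵖ → ℓᵖ be a surjective linear isometry. Then there exist signs εₙ ∈ {−1,1} and a permutation π of ℕ such that T maps each sequence (aₙ) to (εₙ a_{π(n)}). -/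
open scoped ENNReal NNReal

-- strict superadditivity of rpow for q > 1
lemma rpow_strict_superadd {q u v : ℝ} (hq : 1 < q) (hu : 0 < u) (hv : 0 < v) :
    u ^ q + v ^ q < (u + v) ^ q := by
  have hq1 : (0:ℝ) < q - 1 := by linarith
  have h1 : u ^ (q-1) < (u+v) ^ (q-1) := Real.rpow_lt_rpow hu.le (by linarith) hq1
  have h2 : v ^ (q-1) < (u+v) ^ (q-1) := Real.rpow_lt_rpow hv.le (by linarith) hq1
  have eu : u ^ q = u * u ^ (q-1) := by
    rw [show q = 1 + (q-1) by ring, Real.rpow_add hu, Real.rpow_one]; ring_nf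
  have ev : v ^ q = v * v ^ (q-1) := by
    rw [show q = 1 + (q-1) by ring, Real.rpow_add hv, Real.rpow_one]; ring_nf
  have euv : (u+v) ^ q = u * (u+v) ^ (q-1) + v * (u+v) ^ (q-1) := by
    rw [show q = 1 + (q-1) by ring, Real.rpow_add (by linarith), Real.rpow_one]; ring_nf
  rw [eu, ev, euv]
  exact add_lt_add (mul_lt_mul_of_pos_left h1 hu) (mul_lt_mul_of_pos_left h2 hv)

lemma rpow_strict_subadd {q u v : ℝ} (hq0 : 0 < q) (hq : q < 1) (hu : 0 < u) (hv : 0 < v) :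
    (u + v) ^ q < u ^ q + v ^ q := by
  have hq1 : q - 1 < 0 := by linarith
  have h1 : (u+v) ^ (q-1) < u ^ (q-1) := Real.rpow_lt_rpow_of_neg hu (by linarith) hq1
  have h2 : (u+v) ^ (q-1) < v ^ (q-1) := Real.rpow_lt_rpow_of_neg hv (by linarith) hq1
  have eu : u ^ q = u * u ^ (q-1) := by
    rw [show q = 1 + (q-1) by ring, Real.rpow_add hu, Real.rpow_one]; ring_nf
  have ev : v ^ q = v * v ^ (q-1) := by
    rw [show q = 1 + (q-1) by ring, Real.rpow_add hv, Real.rpow_one]; ring_nf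
  have euv : (u+v) ^ q = u * (u+v) ^ (q-1) + v * (u+v) ^ (q-1) := by
    rw [show q = 1 + (q-1) by ring, Real.rpow_add (by linarith), Real.rpow_one]; ring_nf
  rw [eu, ev, euv]
  exact add_lt_add (mul_lt_mul_of_pos_left h1 hu) (mul_lt_mul_of_pos_left h2 hv)

lemma rpow_superadd {q u v : ℝ} (hq : 1 ≤ q) (hu : 0 ≤ u) (hv : 0 ≤ v) :
    u ^ q + v ^ q ≤ (u + v) ^ q := by
  lift u to ℝ≥0 using hu
  lift v to ℝ≥0 using hv
  exact_mod_cast NNReal.add_rpow_le_rpow_add u v hq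

-- two-point convexity of rpow, q ≥ 1
lemma rpow_two_point_convex {q s t : ℝ} (hq : 1 ≤ q) (hs : 0 ≤ s) (ht : 0 ≤ t) :
    (s + t) ^ q ≤ 2 ^ (q - 1) * (s ^ q + t ^ q) := by
  lift s to ℝ≥0 using hs
  lift t to ℝ≥0 using ht
  exact_mod_cast NNReal.rpow_add_le_mul_rpow_add_rpow s t hq

-- two-point concavity of rpow, 0 < q ≤ 1
lemma rpow_two_point_concave {q s t : ℝ} (hq0 : 0 < q) (hq : q ≤ 1) (hs : 0 ≤ s) (ht : 0 ≤ t) :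
    s ^ q + t ^ q ≤ 2 ^ (1 - q) * (s + t) ^ q := by
  have h1q : 1 ≤ 1/q := (le_div_iff₀ hq0).2 (by linarith)
  have h := rpow_two_point_convex (q := 1/q) h1q (Real.rpow_nonneg hs q) (Real.rpow_nonneg ht q)
  rw [one_div, Real.rpow_rpow_inv hs hq0.ne', Real.rpow_rpow_inv ht hq0.ne'] at h
  have h2 : ((s ^ q + t ^ q) ^ q⁻¹) ^ q ≤ (2 ^ (q⁻¹ - 1) * (s + t)) ^ q :=
    Real.rpow_le_rpow (Real.rpow_nonneg (by positivity) _) h hq0.le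
  rw [Real.rpow_inv_rpow (by positivity) hq0.ne'] at h2
  calc s ^ q + t ^ q ≤ (2 ^ (q⁻¹ - 1) * (s + t)) ^ q := h2
    _ = 2 ^ (1 - q) * (s + t) ^ q := by
        rw [Real.mul_rpow (by positivity) (by positivity),
          ← Real.rpow_mul (by norm_num : (0:ℝ) ≤ 2)]
        congr 2
        field_simp


lemma rpow_subadd {q u v : ℝ} (hq0 : 0 ≤ q) (hq : q ≤ 1) (hu : 0 ≤ u) (hv : 0 ≤ v) :
    (u + v) ^ q ≤ u ^ q + v ^ q := by
  lift u to ℝ≥0 using hu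
  lift v to ℝ≥0 using hv
  exact_mod_cast NNReal.rpow_add_le_add_rpow u v hq0 hq

lemma abs_rpow_sq {pr : ℝ} (x : ℝ) : |x| ^ pr = (x ^ 2) ^ (pr / 2) := by
  rw [← sq_abs, ← Real.rpow_natCast |x| 2, ← Real.rpow_mul (abs_nonneg x)]
  norm_num
  ring_nf

-- key pointwise inequality, p > 2
lemma key_gt {pr : ℝ} (h2 : 2 < pr) (a b : ℝ) :
    2 * |a| ^ pr + 2 * |b| ^ pr ≤ |a + b| ^ pr + |a - b| ^ pr ∧
      (a ≠ 0 → b ≠ 0 → 2 * |a| ^ pr + 2 * |b| ^ pr < |a + b| ^ pr + |a - b| ^ pr) := by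
  set q := pr / 2 with hqdef
  have hq : 1 < q := by rw [hqdef]; linarith
  have hab : |a + b| ^ pr = ((a + b) ^ 2) ^ q := abs_rpow_sq _
  have hab' : |a - b| ^ pr = ((a - b) ^ 2) ^ q := abs_rpow_sq _
  have ha : |a| ^ pr = (a ^ 2) ^ q := abs_rpow_sq _
  have hb : |b| ^ pr = (b ^ 2) ^ q := abs_rpow_sq _
  have key1 : 2 * (a ^ 2 + b ^ 2) ^ q ≤ ((a + b) ^ 2) ^ q + ((a - b) ^ 2) ^ q := by
    have hc := rpow_two_point_convex hq.le (sq_nonneg (a + b)) (sq_nonneg (a - b))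
    rw [show (a + b) ^ 2 + (a - b) ^ 2 = 2 * (a ^ 2 + b ^ 2) by ring,
      Real.mul_rpow (by norm_num) (by positivity)] at hc
    have hP : (0:ℝ) < 2 ^ (q - 1) := Real.rpow_pos_of_pos two_pos _
    have h2q : (2:ℝ) ^ q = 2 * 2 ^ (q - 1) := by
      conv_lhs => rw [show q = 1 + (q - 1) by ring]
      rw [Real.rpow_add two_pos, Real.rpow_one]
    rw [h2q] at hc
    have h' : 2 ^ (q - 1) * (2 * (a ^ 2 + b ^ 2) ^ q) ≤
        2 ^ (q - 1) * (((a + b) ^ 2) ^ q + ((a - b) ^ 2) ^ q) := by nlinarith [hc]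
    exact le_of_mul_le_mul_left h' hP
  constructor
  · have key2 : (a ^ 2) ^ q + (b ^ 2) ^ q ≤ (a ^ 2 + b ^ 2) ^ q :=
      rpow_superadd hq.le (sq_nonneg a) (sq_nonneg b)
    rw [hab, hab', ha, hb]; linarith
  · intro ha0 hb0
    have key2 : (a ^ 2) ^ q + (b ^ 2) ^ q < (a ^ 2 + b ^ 2) ^ q :=
      rpow_strict_superadd hq (by positivity) (by positivity)
    rw [hab, hab', ha, hb]; linarith

-- key pointwise inequality, 1 <= p < 2
lemma key_lt {pr : ℝ} (h1 : 1 ≤ pr) (h2 : pr < 2) (a b : ℝ) :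
    |a + b| ^ pr + |a - b| ^ pr ≤ 2 * |a| ^ pr + 2 * |b| ^ pr ∧
      (a ≠ 0 → b ≠ 0 → |a + b| ^ pr + |a - b| ^ pr < 2 * |a| ^ pr + 2 * |b| ^ pr) := by
  set q := pr / 2 with hqdef
  have hq0 : 0 < q := by rw [hqdef]; linarith
  have hq : q < 1 := by rw [hqdef]; linarith
  have hab : |a + b| ^ pr = ((a + b) ^ 2) ^ q := abs_rpow_sq _
  have hab' : |a - b| ^ pr = ((a - b) ^ 2) ^ q := abs_rpow_sq _
  have ha : |a| ^ pr = (a ^ 2) ^ q := abs_rpow_sq _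
  have hb : |b| ^ pr = (b ^ 2) ^ q := abs_rpow_sq _
  have key1 : ((a + b) ^ 2) ^ q + ((a - b) ^ 2) ^ q ≤ 2 * (a ^ 2 + b ^ 2) ^ q := by
    have hc := rpow_two_point_concave hq0 hq.le (sq_nonneg (a + b)) (sq_nonneg (a - b))
    rw [show (a + b) ^ 2 + (a - b) ^ 2 = 2 * (a ^ 2 + b ^ 2) by ring,
      Real.mul_rpow (by norm_num) (by positivity)] at hc
    have h2q : (2:ℝ) ^ (1 - q) * (2:ℝ) ^ q = 2 := by
      rw [← Real.rpow_add two_pos]; norm_num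
    calc ((a + b) ^ 2) ^ q + ((a - b) ^ 2) ^ q
        ≤ 2 ^ (1 - q) * (2 ^ q * (a ^ 2 + b ^ 2) ^ q) := hc
      _ = 2 * (a ^ 2 + b ^ 2) ^ q := by rw [← mul_assoc, h2q]
  constructor
  · have key2 : (a ^ 2 + b ^ 2) ^ q ≤ (a ^ 2) ^ q + (b ^ 2) ^ q :=
      rpow_subadd hq0.le hq.le (sq_nonneg a) (sq_nonneg b)
    rw [hab, hab', ha, hb]; linarith
  · intro ha0 hb0
    have key2 : (a ^ 2 + b ^ 2) ^ q < (a ^ 2) ^ q + (b ^ 2) ^ q :=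
      rpow_strict_subadd hq0 hq (by positivity) (by positivity)
    rw [hab, hab', ha, hb]; linarith

-- equality case when a*b = 0
lemma key_eq {pr : ℝ} (hpr : 0 < pr) {a b : ℝ} (h : a * b = 0) :
    |a + b| ^ pr + |a - b| ^ pr = 2 * |a| ^ pr + 2 * |b| ^ pr := by
  rcases mul_eq_zero.1 h with rfl | rfl
  · simp only [zero_add, zero_sub, abs_neg, abs_zero, Real.zero_rpow hpr.ne']
    ring
  · simp only [add_zero, sub_zero, abs_zero, Real.zero_rpow hpr.ne']
    ring
section DisjLemma

variable {p : ℝ≥0∞} [hp1 : Fact (1 ≤ p)]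

lemma pr_facts (hptop : p ≠ ∞) : 0 < p.toReal ∧ 1 ≤ p.toReal := by
  constructor
  · exact ENNReal.toReal_pos (by exact_mod_cast (zero_lt_one.trans_le hp1.out).ne') hptop
  · have := ENNReal.toReal_mono hptop hp1.out
    simpa using this

lemma disj_iff (hp2 : p ≠ 2) (hptop : p ≠ ∞) (x y : lp (fun _ : ℕ => ℝ) p) :
    (∀ n, x n * y n = 0) ↔
      ‖x + y‖ ^ p.toReal + ‖x - y‖ ^ p.toReal
        = 2 * ‖x‖ ^ p.toReal + 2 * ‖y‖ ^ p.toReal := by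
  obtain ⟨hp0, hpr1⟩ := pr_facts hptop
  set pr := p.toReal with hprdef
  have hpr2 : pr ≠ 2 := by
    intro h
    have h2t : (2:ℝ≥0∞).toReal = 2 := by norm_num
    exact hp2 ((ENNReal.toReal_eq_toReal_iff' hptop (by norm_num : (2:ℝ≥0∞) ≠ ∞)).1
      (by rw [h2t]; exact h))
  have sx : Summable fun n => ‖x n‖ ^ pr := (lp.memℓp x).summable hp0
  have sy : Summable fun n => ‖y n‖ ^ pr := (lp.memℓp y).summable hp0
  have sxy : Summable fun n => ‖(x + y) n‖ ^ pr := (lp.memℓp (x + y)).summable hp0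
  have sxy' : Summable fun n => ‖(x - y) n‖ ^ pr := (lp.memℓp (x - y)).summable hp0
  have hadd : ∀ n, (x + y) n = x n + y n := fun n => by
    rw [lp.coeFn_add]; rfl
  have hsub : ∀ n, (x - y) n = x n - y n := fun n => by
    rw [lp.coeFn_sub]; rfl
  have nx : ‖x‖ ^ pr = ∑' n, |x n| ^ pr := by
    simpa [Real.norm_eq_abs] using lp.norm_rpow_eq_tsum hp0 x
  have ny : ‖y‖ ^ pr = ∑' n, |y n| ^ pr := by
    simpa [Real.norm_eq_abs] using lp.norm_rpow_eq_tsum hp0 y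
  have nxy : ‖x + y‖ ^ pr = ∑' n, |x n + y n| ^ pr := by
    simpa [Real.norm_eq_abs, hadd] using lp.norm_rpow_eq_tsum hp0 (x + y)
  have nxy' : ‖x - y‖ ^ pr = ∑' n, |x n - y n| ^ pr := by
    simpa [Real.norm_eq_abs, hsub] using lp.norm_rpow_eq_tsum hp0 (x - y)
  have sx' : Summable fun n => |x n| ^ pr := by simpa [Real.norm_eq_abs] using sx
  have sy' : Summable fun n => |y n| ^ pr := by simpa [Real.norm_eq_abs] using sy
  have sxy1 : Summable fun n => |x n + y n| ^ pr := by
    simpa [Real.norm_eq_abs, hadd] using sxy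
  have sxy2 : Summable fun n => |x n - y n| ^ pr := by
    simpa [Real.norm_eq_abs, hsub] using sxy'
  rcases lt_or_gt_of_ne hpr2 with hlt | hgt
  · -- pr < 2 : g n := 2|x n|^pr + 2|y n|^pr - (|x n + y n|^pr + |x n - y n|^pr) ≥ 0
    set g : ℕ → ℝ := fun n =>
      2 * |x n| ^ pr + 2 * |y n| ^ pr - (|x n + y n| ^ pr + |x n - y n| ^ pr) with hg
    have hgnn : ∀ n, 0 ≤ g n := fun n =>
      sub_nonneg.2 (key_lt hpr1 hlt (x n) (y n)).1
    have hgsum : Summable g :=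
      ((sx'.mul_left 2).add (sy'.mul_left 2)).sub (sxy1.add sxy2)
    have htsum : ∑' n, g n =
        (2 * ‖x‖ ^ pr + 2 * ‖y‖ ^ pr) - (‖x + y‖ ^ pr + ‖x - y‖ ^ pr) := by
      rw [nx, ny, nxy, nxy', ← tsum_mul_left, ← tsum_mul_left,
        ← Summable.tsum_add (sx'.mul_left 2) (sy'.mul_left 2), ← Summable.tsum_add sxy1 sxy2,
        ← Summable.tsum_sub ((sx'.mul_left 2).add (sy'.mul_left 2)) (sxy1.add sxy2)]
    constructor
    · intro hdisj
      have : ∀ n, g n = 0 := fun n => by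
        simp only [hg]; beta_reduce; linarith [key_eq (pr := pr) hp0 (hdisj n)]
      have h0 : ∑' n, g n = 0 := by simp [this]
      rw [htsum] at h0
      linarith
    · intro heq
      have h0 : ∑' n, g n = 0 := by rw [htsum]; linarith
      intro n
      by_contra hne
      have hx0 : x n ≠ 0 := fun h => hne (by simp [h])
      have hy0 : y n ≠ 0 := fun h => hne (by simp [h])
      have hpos : 0 < g n := sub_pos.2 ((key_lt hpr1 hlt (x n) (y n)).2 hx0 hy0)
      have hle : g n ≤ ∑' m, g m := Summable.le_tsum hgsum n fun m _ => hgnn m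
      linarith
  · -- 2 < pr
    set g : ℕ → ℝ := fun n =>
      (|x n + y n| ^ pr + |x n - y n| ^ pr) - (2 * |x n| ^ pr + 2 * |y n| ^ pr) with hg
    have hgnn : ∀ n, 0 ≤ g n := fun n =>
      sub_nonneg.2 (key_gt hgt (x n) (y n)).1
    have hgsum : Summable g :=
      (sxy1.add sxy2).sub ((sx'.mul_left 2).add (sy'.mul_left 2))
    have htsum : ∑' n, g n =
        (‖x + y‖ ^ pr + ‖x - y‖ ^ pr) - (2 * ‖x‖ ^ pr + 2 * ‖y‖ ^ pr) := by
      rw [nx, ny, nxy, nxy', ← tsum_mul_left, ← tsum_mul_left,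
        ← Summable.tsum_add (sx'.mul_left 2) (sy'.mul_left 2), ← Summable.tsum_add sxy1 sxy2,
        ← Summable.tsum_sub (sxy1.add sxy2) ((sx'.mul_left 2).add (sy'.mul_left 2))]
    constructor
    · intro hdisj
      have : ∀ n, g n = 0 := fun n => by
        simp only [hg]; beta_reduce; linarith [key_eq (pr := pr) hp0 (hdisj n)]
      have h0 : ∑' n, g n = 0 := by simp [this]
      rw [htsum] at h0
      linarith
    · intro heq
      have h0 : ∑' n, g n = 0 := by rw [htsum]; linarith
      intro n
      by_contra hne
      have hx0 : x n ≠ 0 := fun h => hne (by simp [h])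
      have hy0 : y n ≠ 0 := fun h => hne (by simp [h])
      have hpos : 0 < g n := sub_pos.2 ((key_gt hgt (x n) (y n)).2 hx0 hy0)
      have hle : g n ≤ ∑' m, g m := Summable.le_tsum hgsum n fun m _ => hgnn m
      linarith

end DisjLemma
section Main

variable {p : ℝ≥0∞} [hp1 : Fact (1 ≤ p)]

local notation "X" => lp (fun _ : ℕ => ℝ) p

lemma coord_add (x y : X) (m : ℕ) : (x + y) m = x m + y m := by
  rw [lp.coeFn_add]; rfl

lemma coord_sub (x y : X) (m : ℕ) : (x - y) m = x m - y m := by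
  rw [lp.coeFn_sub]; rfl

lemma coord_smul (c : ℝ) (x : X) (m : ℕ) : (c • x) m = c * x m := by
  rw [lp.coeFn_smul]; rfl

lemma disj_transfer (hp2 : p ≠ 2) (hptop : p ≠ ∞)
    (B : X →ₗ[ℝ] X) (hBnorm : ∀ x, ‖B x‖ = ‖x‖)
    {x y : X} (h : ∀ m, x m * y m = 0) : ∀ m, (B x) m * (B y) m = 0 := by
  apply (disj_iff hp2 hptop (B x) (B y)).2
  rw [← map_add, ← map_sub, hBnorm, hBnorm, hBnorm, hBnorm]
  exact (disj_iff hp2 hptop x y).1 h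

lemma norm_single_one (hptop : p ≠ ∞) (i : ℕ) : ‖(lp.single p i (1:ℝ) : X)‖ = 1 := by
  obtain ⟨hp0, -⟩ := pr_facts (p := p) hptop
  simpa using lp.norm_single (E := fun _ : ℕ => ℝ) (ENNReal.toReal_pos_iff.1 hp0).1 i (1:ℝ)

lemma single_one_ne_zero (i : ℕ) : (lp.single p i (1:ℝ) : X) ≠ 0 := by
  intro h
  have h1 : (lp.single p i (1:ℝ) : X) i = 1 :=
    lp.single_apply_self (E := fun _ : ℕ => ℝ) p i 1
  rw [h] at h1
  simp [lp.coeFn_zero] at h1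

lemma image_single (hp2 : p ≠ 2) (hptop : p ≠ ∞)
    (A B : X →ₗ[ℝ] X) (hBA : ∀ x, B (A x) = x)
    (hAnorm : ∀ x, ‖A x‖ = ‖x‖) (hBnorm : ∀ x, ‖B x‖ = ‖x‖) (n : ℕ) :
    ∃ (i : ℕ) (c : ℝ), (c = 1 ∨ c = -1) ∧
      A (lp.single p n (1:ℝ)) = c • lp.single p i (1:ℝ) := by
  set δ : ℕ → X := fun i => lp.single p i (1:ℝ) with hδ
  have hδself : ∀ i, (δ i) i = 1 := fun i =>
    lp.single_apply_self (E := fun _ : ℕ => ℝ) p i 1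
  have hδne : ∀ i m, m ≠ i → (δ i) m = 0 := fun i m hm =>
    lp.single_apply_ne (E := fun _ : ℕ => ℝ) p i 1 hm
  have hBinj : Function.Injective B := by
    intro a b h
    have h0 : ‖a - b‖ = 0 := by rw [← hBnorm, map_sub, h, sub_self, norm_zero]
    rwa [norm_eq_zero, sub_eq_zero] at h0
  set u : X := A (δ n) with hu
  have hunorm : ‖u‖ = 1 := by rw [hu, hAnorm]; exact norm_single_one hptop n
  -- u has at most one nonzero coordinate
  have claim : ∀ i j, i ≠ j → u i ≠ 0 → u j ≠ 0 → False := by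
    intro i j hij ha hb
    set r : X := u - u i • δ i - u j • δ j with hr
    have hri : ∀ m, r m * (δ i) m = 0 := by
      intro m
      by_cases hm : m = i
      · rw [hm]
        have : r i = 0 := by
          rw [hr, coord_sub, coord_sub, coord_smul, coord_smul, hδself i,
            hδne j i hij]
          ring
        rw [this, zero_mul]
      · rw [hδne i m hm, mul_zero]
    have hrj : ∀ m, r m * (δ j) m = 0 := by
      intro m
      by_cases hm : m = j
      · rw [hm]
        have : r j = 0 := by
          rw [hr, coord_sub, coord_sub, coord_smul, coord_smul, hδself j, hδne i j (Ne.symm hij)]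
          ring
        rw [this, zero_mul]
      · rw [hδne j m hm, mul_zero]
    have hδij : ∀ m, (δ i) m * (δ j) m = 0 := by
      intro m
      by_cases hm : m = i
      · rw [hm, hδne j i hij, mul_zero]
      · rw [hδne i m hm, zero_mul]
    have hxy := disj_transfer hp2 hptop B hBnorm hδij
    have hrx := disj_transfer hp2 hptop B hBnorm hri
    have hry := disj_transfer hp2 hptop B hBnorm hrj
    have hdecomp : δ n = u i • B (δ i) + u j • B (δ j) + B r := by
      have h1 : u = u i • δ i + u j • δ j + r := by rw [hr]; abel
      calc δ n = B u := (hBA (δ n)).symm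
        _ = u i • B (δ i) + u j • B (δ j) + B r := by
            conv_lhs => rw [h1]
            rw [map_add, map_add, map_smul, map_smul]
    have key : ∀ m, (B (δ i)) m ≠ 0 → m = n := by
      intro m hm
      by_contra hmn
      have h0 : (δ n) m = 0 := hδne n m hmn
      have e : (δ n) m = u i * (B (δ i)) m + u j * (B (δ j)) m + (B r) m := by
        rw [hdecomp, coord_add, coord_add, coord_smul, coord_smul]
      have e1 : (B (δ j)) m = 0 := by
        rcases mul_eq_zero.1 (hxy m) with h | h
        · exact absurd h hm
        · exact h
      have e2 : (B r) m = 0 := by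
        rcases mul_eq_zero.1 (hrx m) with h | h
        · exact h
        · exact absurd h hm
      rw [e1, e2, mul_zero, add_zero, add_zero] at e
      rw [h0] at e
      exact hm (by rcases mul_eq_zero.1 e.symm with h | h
                   · exact absurd h ha
                   · exact h)
    have keyj : ∀ m, (B (δ j)) m ≠ 0 → m = n := by
      intro m hm
      by_contra hmn
      have h0 : (δ n) m = 0 := hδne n m hmn
      have e : (δ n) m = u i * (B (δ i)) m + u j * (B (δ j)) m + (B r) m := by
        rw [hdecomp, coord_add, coord_add, coord_smul, coord_smul]
      have e1 : (B (δ i)) m = 0 := by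
        rcases mul_eq_zero.1 (hxy m) with h | h
        · exact h
        · exact absurd h hm
      have e2 : (B r) m = 0 := by
        rcases mul_eq_zero.1 (hry m) with h | h
        · exact h
        · exact absurd h hm
      rw [e1, e2, mul_zero, zero_add, add_zero] at e
      rw [h0] at e
      exact hm (by rcases mul_eq_zero.1 e.symm with h | h
                   · exact absurd h hb
                   · exact h)
    -- B (δ i) ≠ 0, so it has a nonzero coordinate, which must be n
    have hBi : (B (δ i)) n ≠ 0 := by
      have hne : B (δ i) ≠ 0 := by
        intro h
        exact single_one_ne_zero i (hBinj (by rw [h, map_zero]))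
      by_contra hn
      apply hne
      apply lp.ext
      funext m
      by_cases hm : m = n
      · subst hm; simpa [lp.coeFn_zero] using hn
      · by_contra hmm
        exact hm (key m (by simpa [lp.coeFn_zero] using hmm))
    have hBj : (B (δ j)) n ≠ 0 := by
      have hne : B (δ j) ≠ 0 := by
        intro h
        exact single_one_ne_zero j (hBinj (by rw [h, map_zero]))
      by_contra hn
      apply hne
      apply lp.ext
      funext m
      by_cases hm : m = n
      · subst hm; simpa [lp.coeFn_zero] using hn
      · by_contra hmm
        exact hm (keyj m (by simpa [lp.coeFn_zero] using hmm))
    rcases mul_eq_zero.1 (hxy n) with h | h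
    · exact hBi h
    · exact hBj h
  -- u ≠ 0, so it has a nonzero coordinate i, unique
  have hu0 : u ≠ 0 := by
    intro h
    rw [h, norm_zero] at hunorm
    exact one_ne_zero hunorm.symm
  have hex : ∃ i, u i ≠ 0 := by
    by_contra h
    push_neg at h
    exact hu0 (lp.ext (funext fun m => by simpa [lp.coeFn_zero] using h m))
  obtain ⟨i, hi⟩ := hex
  have hrest : ∀ j, j ≠ i → u j = 0 := by
    intro j hj
    by_contra hj0
    exact claim i j (Ne.symm hj) hi hj0
  have huc : u = u i • δ i := by
    apply lp.ext
    funext m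
    by_cases hm : m = i
    · subst hm; rw [lp.coeFn_smul]; show u m = u m • (δ m) m; rw [hδself, smul_eq_mul, mul_one]
    · rw [lp.coeFn_smul]
      show u m = u i • (δ i) m
      rw [hδne i m hm, smul_zero]
      exact hrest m hm
  have habs : |u i| = 1 := by
    have : ‖u‖ = |u i| * ‖δ i‖ := by
      rw [huc, norm_smul, Real.norm_eq_abs]
      congr 1
      rw [← huc]
    rw [hunorm, norm_single_one hptop i] at this
    linarith [this]
  refine ⟨i, u i, ?_, huc⟩
  rcases abs_eq (by norm_num : (0:ℝ) ≤ 1) |>.1 habs with h | h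
  · exact Or.inl h
  · exact Or.inr h

/-- For `1 ≤ p < ∞`, `p ≠ 2`, every surjective linear isometry of `ℓᵖ` is a signed
permutation of the coordinates. -/
theorem lp_isometry_standard (p : ℝ≥0∞) [hp1 : Fact (1 ≤ p)] (hp2 : p ≠ 2) (hptop : p ≠ ∞)
    (T : lp (fun _ : ℕ => ℝ) p →ₗ[ℝ] lp (fun _ : ℕ => ℝ) p)
    (hiso : Isometry T) (hsurj : Function.Surjective T) :
    ∃ (ε : ℕ → ℝ) (π : Equiv.Perm ℕ), (∀ n, ε n = 1 ∨ ε n = -1) ∧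
      ∀ (x : lp (fun _ : ℕ => ℝ) p) (n : ℕ), (T x) n = ε n * x (π n) := by
  obtain ⟨hp0, hpr1⟩ := pr_facts (p := p) hptop
  have hp_ne : p ≠ 0 := by
    intro h
    rw [h] at hp0
    simp at hp0
  have hTnorm : ∀ x, ‖T x‖ = ‖x‖ := fun x => hiso.norm_map_of_map_zero (map_zero T) x
  have hTinj : Function.Injective T := hiso.injective
  let eT := LinearEquiv.ofBijective T ⟨hTinj, hsurj⟩
  set S : lp (fun _ : ℕ => ℝ) p →ₗ[ℝ] lp (fun _ : ℕ => ℝ) p := eT.symm.toLinearMap with hSdef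
  have hST : ∀ x, T (S x) = x := fun x => eT.apply_symm_apply x
  have hTS : ∀ x, S (T x) = x := fun x => eT.symm_apply_apply x
  have hSnorm : ∀ x, ‖S x‖ = ‖x‖ := fun x => by
    conv_rhs => rw [← hST x]
    rw [hTnorm]
  set δ : ℕ → lp (fun _ : ℕ => ℝ) p := fun i => lp.single p i (1:ℝ) with hδ
  have hδself : ∀ i, (δ i) i = 1 := fun i =>
    lp.single_apply_self (E := fun _ : ℕ => ℝ) p i 1
  have hδne : ∀ i m, m ≠ i → (δ i) m = 0 := fun i m hm =>
    lp.single_apply_ne (E := fun _ : ℕ => ℝ) p i 1 hm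
  choose σ c hc hTσ using image_single hp2 hptop T S hTS hTnorm hSnorm
  choose τ d hd hSτ using image_single hp2 hptop S T hST hSnorm hTnorm
  have hc0 : ∀ n, c n ≠ 0 := fun n => by rcases hc n with h | h <;> rw [h] <;> norm_num
  -- coordinates of T (δ n)
  have hTco : ∀ n m, (T (δ n)) m = c n * (δ (σ n)) m := by
    intro n m
    show (T (lp.single p n (1:ℝ))) m
      = c n * ((lp.single p (σ n) (1:ℝ) : lp (fun _ : ℕ => ℝ) p) m)
    rw [hTσ n, coord_smul]
  -- σ is injective
  have hσinj : Function.Injective σ := by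
    intro n m hnm
    by_contra hne
    have hdisj : ∀ k, (δ n) k * (δ m) k = 0 := by
      intro k
      by_cases hk : k = n
      · rw [hk, hδne m n hne, mul_zero]
      · rw [hδne n k hk, zero_mul]
    have hT := disj_transfer hp2 hptop T hTnorm hdisj (σ n)
    rw [hTco n (σ n), hTco m (σ n), hδself (σ n), ← hnm, hδself (σ n)] at hT
    simp only [mul_one] at hT
    rcases mul_eq_zero.1 hT with h | h
    · exact hc0 n h
    · exact hc0 m h
  -- σ is surjective
  have hσsurj : Function.Surjective σ := by
    intro k
    refine ⟨τ k, ?_⟩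
    have h1 : T (S (δ k)) = δ k := hST (δ k)
    have h1' : T (S (δ k)) = d k • T (δ (τ k)) := by
      show T (S (lp.single p k (1:ℝ))) = d k • T (lp.single p (τ k) (1:ℝ))
      rw [hSτ k, map_smul]
    have h2 : (δ k) k = d k * (T (δ (τ k))) k := by
      rw [← h1, h1', coord_smul]
    rw [hδself k, hTco (τ k) k] at h2
    by_contra hne
    rw [hδne (σ (τ k)) k (fun h => hne h.symm)] at h2
    simp at h2
  let σe : Equiv.Perm ℕ := Equiv.ofBijective σ ⟨hσinj, hσsurj⟩
  refine ⟨fun n => c (σe.symm n), σe.symm, fun n => hc _, ?_⟩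
  intro x n
  let Tc : lp (fun _ : ℕ => ℝ) p →L[ℝ] lp (fun _ : ℕ => ℝ) p :=
    T.mkContinuous 1 (fun y => by rw [hTnorm, one_mul])
  let ev : lp (fun _ : ℕ => ℝ) p →L[ℝ] ℝ :=
    LinearMap.mkContinuous
      { toFun := fun f => f n
        map_add' := fun f g => coord_add f g n
        map_smul' := fun a f => coord_smul a f n }
      1 (fun f => by
          rw [one_mul]
          exact lp.norm_apply_le_norm hp_ne f n)
  have hx := lp.hasSum_single hptop x
  have hsum : HasSum (fun m => ev (Tc (lp.single p m (x m)))) (ev (Tc x)) :=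
    (hx.mapL Tc).mapL ev
  have hval : ∀ m, ev (Tc (lp.single p m (x m))) = x m * (c m * (δ (σ m)) n) := by
    intro m
    have h1 : (lp.single p m (x m) : lp (fun _ : ℕ => ℝ) p)
        = x m • (lp.single p m (1:ℝ) : lp (fun _ : ℕ => ℝ) p) := by
      have hs := lp.single_smul (E := fun _ : ℕ => ℝ) p m (x m) (1:ℝ)
      rw [← hs, smul_eq_mul, mul_one]
    have h2 : ev (Tc (lp.single p m (x m))) = (T (lp.single p m (x m))) n := rfl
    rw [h2, h1, map_smul, coord_smul]
    congr 1
    exact hTco m n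
  rw [funext hval] at hsum
  have hts := hsum.tsum_eq
  have hvanish : ∀ m, m ≠ σe.symm n → x m * (c m * (δ (σ m)) n) = 0 := by
    intro m hm
    have hσm : σ m ≠ n := by
      intro h
      apply hm
      have h' : σe m = n := h
      rw [← h', Equiv.symm_apply_apply]
    rw [hδne (σ m) n (fun h => hσm h.symm), mul_zero, mul_zero]
  rw [tsum_eq_single (σe.symm n) hvanish] at hts
  have hσπ : σ (σe.symm n) = n := σe.apply_symm_apply n
  rw [hσπ, hδself n] at hts
  have hTxn : (T x) n = ev (Tc x) := rfl
  rw [hTxn, ← hts]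
  ring

end Main
end

section
/- Every surjective linear isometry T : c₀ → c₀ has the form T(aₙ) = (εₙ a_{π(n)}) for some signs εₙ ∈ {−1,1} and some permutation π of ℕ. -/
/-! Every functional `φ` on `c₀` is `f ↦ ∑ₖ f k * φ eₖ` with `∑ₖ |φ eₖ| ≤ ‖φ‖`, so the rows of
the matrix `t m k = (T eₖ) m` lie in the unit ball of `ℓ¹`. If `T f = eₘ`, then `‖f‖ = 1` and
`1 = ∑ₖ f k * t m k ≤ ∑ₖ |t m k| ≤ 1`, which forces `|f k| = 1` wherever `t m k ≠ 0`. As `f k` is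
an entry of the matrix of `T⁻¹`, the same argument for `T⁻¹` shows that every nonzero entry of `t`
has modulus one, and the row bound leaves exactly one of them in each row. Since `t m k ≠ 0`
exactly when the `(k, m)` entry of the matrix of `T⁻¹` is nonzero, the same holds for columns. -/

open scoped ZeroAtInfty

open Filter Topology

theorem exists_equiv_forall_iff_of_existsUnique {α β : Type*} {R : α → β → Prop}
    (h₁ : ∀ a, ∃! b, R a b) (h₂ : ∀ b, ∃! a, R a b) : ∃ σ : α ≃ β, ∀ a b, R a b ↔ σ a = b := by
  choose σ hσ hσ_unique using h₁
  have key : ∀ a b, R a b ↔ σ a = b :=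
    fun a b => ⟨fun h => (hσ_unique a b h).symm, fun h => h ▸ hσ a⟩
  refine ⟨Equiv.ofBijective σ ((Function.bijective_iff_existsUnique σ).2 fun b => ?_), key⟩
  simpa only [← key] using h₂ b

namespace ZeroAtInftyContinuousMap

section Norm

variable {α E : Type*} [TopologicalSpace α] [NormedAddCommGroup E]

theorem norm_apply_le_norm (f : C₀(α, E)) (x : α) : ‖f x‖ ≤ ‖f‖ :=
  f.toBCF.norm_coe_le_norm x

theorem norm_le {f : C₀(α, E)} {C : ℝ} (hC : 0 ≤ C) : ‖f‖ ≤ C ↔ ∀ x, ‖f x‖ ≤ C :=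
  BoundedContinuousFunction.norm_le hC

variable (𝕜 : Type*) [NontriviallyNormedField 𝕜] [NormedSpace 𝕜 E]

noncomputable def evalCLM (x : α) : C₀(α, E) →L[𝕜] E :=
  LinearMap.mkContinuous
    { toFun := fun f => f x
      map_add' := fun _ _ => rfl
      map_smul' := fun _ _ => rfl }
    1 fun f => by simpa using norm_apply_le_norm f x

@[simp]
theorem evalCLM_apply (x : α) (f : C₀(α, E)) : evalCLM 𝕜 x f = f x := rfl

theorem norm_evalCLM_comp_linearIsometry_le (u : C₀(α, E) →ₗᵢ[𝕜] C₀(α, E)) (x : α) :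
    ‖(evalCLM 𝕜 x).comp u.toContinuousLinearMap‖ ≤ 1 :=
  ContinuousLinearMap.opNorm_le_bound _ zero_le_one fun f => by
    simpa using norm_apply_le_norm (u f) x

end Norm

section Discrete

variable {ι : Type*} [TopologicalSpace ι] [DiscreteTopology ι] [DecidableEq ι]

section Single

variable {E : Type*} [NormedAddCommGroup E]

def single (i : ι) (x : E) : C₀(ι, E) where
  toFun := Pi.single i x
  continuous_toFun := continuous_of_discreteTopology
  zero_at_infty' := by
    rw [cocompact_eq_cofinite]
    refine tendsto_const_nhds.congr' ?_
    filter_upwards [(Set.finite_singleton i).eventually_cofinite_notMem] with j hj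
    exact (Pi.single_eq_of_ne (M := fun _ => E) hj x).symm

@[simp]
theorem coe_single (i : ι) (x : E) : ⇑(single i x) = Pi.single i x := rfl

theorem sum_single_apply (s : Finset ι) (x : ι → E) (j : ι) :
    (∑ i ∈ s, single i (x i)) j = if j ∈ s then x j else 0 := by
  rw [← Finset.sum_pi_single j x s]
  exact map_sum (⟨⟨fun f : C₀(ι, E) => f j, rfl⟩, fun _ _ => rfl⟩ : C₀(ι, E) →+ E) _ s

@[simp]
theorem norm_single (i : ι) (x : E) : ‖single i x‖ = ‖x‖ := by
  refine le_antisymm ((norm_le (norm_nonneg x)).2 fun j => ?_) ?_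
  · rcases eq_or_ne j i with rfl | hj <;> simp [*]
  · simpa using norm_apply_le_norm (single i x) i

theorem single_eq_smul_single_one (i : ι) (c : ℝ) : single i c = c • single i 1 := by
  ext j
  simp [Pi.single_apply]

theorem hasSum_single_apply (f : C₀(ι, E)) : HasSum (fun i => single i (f i)) f := by
  have hf : Tendsto f cofinite (𝓝 0) := cocompact_eq_cofinite ι ▸ zero_at_infty f
  refine Metric.tendsto_nhds.2 fun ε hε => ?_
  have hsmall : {i | ¬ ‖f i‖ < ε / 2}.Finite := by
    simpa using (Metric.tendsto_nhds.1 hf (ε / 2) (half_pos hε))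
  filter_upwards [eventually_ge_atTop hsmall.toFinset] with s hs
  rw [dist_eq_norm]
  refine lt_of_le_of_lt ((norm_le (half_pos hε).le).2 fun j => ?_) (half_lt_self hε)
  rw [coe_sub, Pi.sub_apply, sum_single_apply]
  split_ifs with hj
  · simpa using (half_pos hε).le
  · rw [zero_sub, norm_neg]
    by_contra h
    exact hj (hs (hsmall.mem_toFinset.2 fun h' => h h'.le))

end Single

section Functional

variable (φ : C₀(ι, ℝ) →L[ℝ] ℝ)

theorem hasSum_mul_apply_single (f : C₀(ι, ℝ)) :
    HasSum (fun i => f i * φ (single i 1)) (φ f) := by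
  simpa [single_eq_smul_single_one _ (f _)] using φ.hasSum (hasSum_single_apply f)

theorem sum_abs_apply_single_le_opNorm (s : Finset ι) : ∑ i ∈ s, |φ (single i 1)| ≤ ‖φ‖ := by
  set g := ∑ i ∈ s, single i (SignType.sign (φ (single i 1)) : ℝ)
  have hg : ‖g‖ ≤ 1 := (norm_le zero_le_one).2 fun j => by
    rw [sum_single_apply]
    split_ifs
    · rcases SignType.sign (φ (single j 1)) with _ | _ | _ <;> simp
    · simp
  calc ∑ i ∈ s, |φ (single i 1)| = φ g := by
        simp [g, map_sum, single_eq_smul_single_one _ (SignType.sign _ : ℝ)]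
    _ ≤ ‖φ g‖ := Real.le_norm_self _
    _ ≤ ‖φ‖ * ‖g‖ := φ.le_opNorm g
    _ ≤ ‖φ‖ := mul_le_of_le_one_right (norm_nonneg φ) hg

theorem summable_abs_apply_single : Summable fun i => |φ (single i 1)| :=
  summable_of_sum_le (fun _ => abs_nonneg _) (sum_abs_apply_single_le_opNorm φ)

theorem tsum_abs_apply_single_le_opNorm : ∑' i, |φ (single i 1)| ≤ ‖φ‖ :=
  Real.tsum_le_of_sum_le (fun _ => abs_nonneg _) (sum_abs_apply_single_le_opNorm φ)

variable {φ}

theorem abs_apply_eq_one_of_map_eq_one (hφ : ‖φ‖ ≤ 1) {f : C₀(ι, ℝ)} (hf : ‖f‖ ≤ 1)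
    (hφf : φ f = 1) {i : ι} (hi : φ (single i 1) ≠ 0) : |f i| = 1 := by
  have hle : ∀ j, |f j| ≤ 1 := fun j => (norm_apply_le_norm f j).trans hf
  refine (hle i).antisymm (not_lt.1 fun hlt => ?_)
  have hterm : ∀ j, f j * φ (single j 1) ≤ |f j| * |φ (single j 1)| := fun j =>
    (le_abs_self _).trans (abs_mul _ _).le
  have hlt' : φ f < ∑' j, |φ (single j 1)| :=
    hasSum_lt (i := i)
      (fun j => (hterm j).trans (mul_le_of_le_one_left (abs_nonneg _) (hle j)))
      ((hterm i).trans_lt (mul_lt_of_lt_one_left (abs_pos.2 hi) hlt))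
      (hasSum_mul_apply_single φ f) (summable_abs_apply_single φ).hasSum
  linarith [tsum_abs_apply_single_le_opNorm φ]

end Functional

section Isometry

variable {u : C₀(ι, ℝ) →ₗᵢ[ℝ] C₀(ι, ℝ)} {m k : ι}

theorem abs_apply_eq_one_of_map_eq_single {f : C₀(ι, ℝ)} (hf : u f = single m 1)
    (hk : u (single k 1) m ≠ 0) : |f k| = 1 :=
  abs_apply_eq_one_of_map_eq_one (norm_evalCLM_comp_linearIsometry_le ℝ u m)
    (by rw [← u.norm_map, hf, norm_single, norm_one]) (by simp [hf]) hk

variable (e : C₀(ι, ℝ) ≃ₗᵢ[ℝ] C₀(ι, ℝ))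

theorem abs_symm_single_apply_eq_one (h : e (single k 1) m ≠ 0) :
    |e.symm (single m 1) k| = 1 :=
  abs_apply_eq_one_of_map_eq_single (u := e.toLinearIsometry) (e.apply_symm_apply _) h

theorem symm_single_apply_ne_zero_iff : e.symm (single m 1) k ≠ 0 ↔ e (single k 1) m ≠ 0 := by
  refine ⟨fun h => ?_, fun h => ?_⟩
  · have := abs_symm_single_apply_eq_one e.symm h
    rw [LinearIsometryEquiv.symm_symm] at this
    exact ne_of_apply_ne abs (by simp [this])
  · exact ne_of_apply_ne abs (by simp [abs_symm_single_apply_eq_one e h])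

theorem abs_single_apply_eq_one (h : e (single k 1) m ≠ 0) : |e (single k 1) m| = 1 := by
  simpa using abs_symm_single_apply_eq_one e.symm ((symm_single_apply_ne_zero_iff e).2 h)

theorem existsUnique_single_apply_ne_zero (m : ι) : ∃! k, e (single k 1) m ≠ 0 := by
  set φ := (evalCLM ℝ m).comp e.toLinearIsometry.toContinuousLinearMap
  have hφ : ∀ g, φ g = e g m := fun _ => rfl
  obtain ⟨k, hk⟩ : ∃ k, e (single k 1) m ≠ 0 := by
    by_contra! h
    have h0 : HasSum (fun k => e.symm (single m 1) k * φ (single k 1)) 0 := by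
      simp [hφ, h, hasSum_zero]
    simpa [hφ] using (hasSum_mul_apply_single φ _).unique h0
  refine ⟨k, hk, fun k' hk' => by_contra fun hne => ?_⟩
  have hpair := sum_abs_apply_single_le_opNorm φ {k', k}
  rw [Finset.sum_pair hne, hφ, hφ, abs_single_apply_eq_one e hk,
    abs_single_apply_eq_one e hk'] at hpair
  linarith [norm_evalCLM_comp_linearIsometry_le ℝ e.toLinearIsometry m]

theorem existsUnique_apply_single_ne_zero (k : ι) : ∃! m, e (single k 1) m ≠ 0 := by
  simpa only [symm_single_apply_ne_zero_iff] using existsUnique_single_apply_ne_zero e.symm k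

end Isometry

end Discrete

theorem exists_signed_perm_of_linearIsometryEquiv {ι : Type*} [TopologicalSpace ι]
    [DiscreteTopology ι] (e : C₀(ι, ℝ) ≃ₗᵢ[ℝ] C₀(ι, ℝ)) :
    ∃ (ε : ι → ℝ) (σ : Equiv.Perm ι), (∀ i, |ε i| = 1) ∧ ∀ f i, e f i = ε i * f (σ i) := by
  classical
  obtain ⟨σ, hσ⟩ := exists_equiv_forall_iff_of_existsUnique
    (existsUnique_single_apply_ne_zero e) (existsUnique_apply_single_ne_zero e)
  refine ⟨fun m => e (single (σ m) 1) m, σ, fun m => abs_single_apply_eq_one e ((hσ _ _).2 rfl),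
    fun f m => ?_⟩
  have hrow : ∀ k ≠ σ m, f k * e (single k 1) m = 0 := fun k hk => by
    rw [not_not.1 (mt (hσ m k).1 (Ne.symm hk)), mul_zero]
  have hcoord :=
    hasSum_mul_apply_single ((evalCLM ℝ m).comp e.toLinearIsometry.toContinuousLinearMap) f
  exact (hcoord.unique (hasSum_single (σ m) hrow)).trans (mul_comm _ _)

end ZeroAtInftyContinuousMap

/-- Every surjective linear isometry of `c₀` is a signed permutation of the
coordinates. -/
theorem c0_isometry_standard (T : C₀(ℕ, ℝ) →ₗ[ℝ] C₀(ℕ, ℝ))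
    (hiso : Isometry T) (hsurj : Function.Surjective T) :
    ∃ (ε : ℕ → ℝ) (π : Equiv.Perm ℕ), (∀ n, ε n = 1 ∨ ε n = -1) ∧
      ∀ (a : C₀(ℕ, ℝ)) (n : ℕ), (T a) n = ε n * a (π n) := by
  obtain ⟨ε, π, hε, hT⟩ := ZeroAtInftyContinuousMap.exists_signed_perm_of_linearIsometryEquiv
    (.ofSurjective (T.toLinearIsometry hiso) hsurj)
  exact ⟨ε, π, fun n => (abs_eq zero_le_one).1 (hε n), hT⟩
end

section
/- Every surjective linear isometry T : c → c has the form T(aₙ) = (εₙ a_{π(n)}) for some signs εₙ ∈ {−1,1} and some permutation π of ℕ. -/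
open scoped ENNReal
open Filter

set_option maxHeartbeats 1000000

/-- The space `c` of convergent real sequences, as a subspace of `ℓ∞` (so it carries
the supremum norm). -/
noncomputable def spaceC : Submodule ℝ (lp (fun _ : ℕ => ℝ) ∞) where
  carrier := {x | ∃ l : ℝ, Filter.Tendsto (fun n => x n) Filter.atTop (nhds l)}
  add_mem' := by
    rintro x y ⟨l, hl⟩ ⟨m, hm⟩
    exact ⟨l + m, by simpa using hl.add hm⟩
  zero_mem' := ⟨0, by simp⟩
  smul_mem' := by
    rintro c x ⟨l, hl⟩
    exact ⟨c * l, by simpa using hl.const_mul c⟩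

namespace CWork

noncomputable def mkC (f : ℕ → ℝ) (C : ℝ) (hC : ∀ n, |f n| ≤ C) {l : ℝ}
    (hl : Filter.Tendsto f Filter.atTop (nhds l)) : spaceC :=
  ⟨⟨f, memℓp_infty ⟨C, by rintro _ ⟨n, rfl⟩; simpa using hC n⟩⟩, ⟨l, hl⟩⟩

@[simp] lemma mkC_apply (f : ℕ → ℝ) (C : ℝ) (hC : ∀ n, |f n| ≤ C) {l : ℝ}
    (hl : Filter.Tendsto f Filter.atTop (nhds l)) (n : ℕ) :
    (mkC f C hC hl).val n = f n := rfl

lemma norm_mkC_le (f : ℕ → ℝ) (C : ℝ) (hC0 : 0 ≤ C) (hC : ∀ n, |f n| ≤ C) {l : ℝ}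
    (hl : Filter.Tendsto f Filter.atTop (nhds l)) : ‖mkC f C hC hl‖ ≤ C :=
  lp.norm_le_of_forall_le hC0 (by simpa using hC)

lemma apply_le_norm (x : spaceC) (n : ℕ) : |x.val n| ≤ ‖x‖ := by
  have := lp.norm_apply_le_norm ENNReal.top_ne_zero x.val n
  rw [Real.norm_eq_abs] at this
  exact this

lemma normC_le (x : spaceC) {C : ℝ} (hC0 : 0 ≤ C) (h : ∀ n, |x.val n| ≤ C) : ‖x‖ ≤ C :=
  lp.norm_le_of_forall_le hC0 (by simpa using h)

noncomputable def cLim (x : spaceC) : ℝ := x.2.choose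

lemma cLim_spec (x : spaceC) : Filter.Tendsto (fun n => x.val n) Filter.atTop (nhds (cLim x)) :=
  x.2.choose_spec

lemma cLim_eq {x : spaceC} {l : ℝ} (h : Filter.Tendsto (fun n => x.val n) Filter.atTop (nhds l)) :
    cLim x = l := tendsto_nhds_unique (cLim_spec x) h

lemma abs_cLim_le (x : spaceC) : |cLim x| ≤ ‖x‖ :=
  le_of_tendsto (cLim_spec x).abs (Filter.Eventually.of_forall fun n => apply_le_norm x n)

lemma val_add (x y : spaceC) (n : ℕ) : (x + y).val n = x.val n + y.val n := by
  have : ((x + y : spaceC) : lp (fun _ : ℕ => ℝ) ∞) = x.val + y.val := rfl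
  rw [this, lp.coeFn_add]; rfl

lemma val_smul (c : ℝ) (x : spaceC) (n : ℕ) : (c • x).val n = c * x.val n := by
  have : ((c • x : spaceC) : lp (fun _ : ℕ => ℝ) ∞) = c • x.val := rfl
  rw [this, lp.coeFn_smul]; rfl

lemma val_zero (n : ℕ) : (0 : spaceC).val n = 0 := rfl

/-- coordinate functional -/
noncomputable def coordL (n : ℕ) : spaceC →ₗ[ℝ] ℝ where
  toFun x := x.val n
  map_add' x y := val_add x y n
  map_smul' c x := val_smul c x n

@[simp] lemma coordL_apply (n : ℕ) (x : spaceC) : coordL n x = x.val n := rfl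

/-- limit functional -/
noncomputable def limL : spaceC →ₗ[ℝ] ℝ where
  toFun := cLim
  map_add' x y := cLim_eq (by simpa [val_add] using (cLim_spec x).add (cLim_spec y))
  map_smul' c x := cLim_eq (by simpa [val_smul] using (cLim_spec x).const_mul c)

@[simp] lemma limL_apply (x : spaceC) : limL x = cLim x := rfl

lemma tendsto_eC (k : ℕ) :
    Filter.Tendsto (fun n => if n = k then (1:ℝ) else 0) Filter.atTop (nhds 0) :=
  tendsto_const_nhds.congr'
    (by filter_upwards [eventually_gt_atTop k] with n hn; simp [hn.ne'])

noncomputable def eC (k : ℕ) : spaceC :=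
  mkC (fun n => if n = k then 1 else 0) 1
    (fun n => by split <;> simp) (tendsto_eC k)

@[simp] lemma eC_apply (k n : ℕ) : (eC k).val n = if n = k then 1 else 0 := rfl

lemma norm_eC_le (k : ℕ) : ‖eC k‖ ≤ 1 := norm_mkC_le _ _ zero_le_one _ _

lemma cLim_eC (k : ℕ) : cLim (eC k) = 0 := cLim_eq (tendsto_eC k)

noncomputable def eOnes : spaceC :=
  mkC (fun _ => 1) 1 (fun n => by simp) (l := 1) tendsto_const_nhds

@[simp] lemma eOnes_apply (n : ℕ) : eOnes.val n = 1 := rfl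

lemma cLim_eOnes : cLim eOnes = 1 := cLim_eq tendsto_const_nhds

end CWork
namespace CWork

lemma mul_sign_self (r : ℝ) : r * Real.sign r = |r| := by
  rcases lt_trichotomy r 0 with h | h | h
  · rw [Real.sign_of_neg h, abs_of_neg h]; ring
  · simp [h]
  · rw [Real.sign_of_pos h, abs_of_pos h]; ring

lemma abs_sign_le (r : ℝ) : |Real.sign r| ≤ 1 := by
  rcases Real.sign_apply_eq r with h | h | h <;> simp [h]

section Rep

variable (g : spaceC →ₗ[ℝ] ℝ)

/-- coefficients of a functional -/
noncomputable def coefA (n : ℕ) : ℝ := g (eC n)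

noncomputable def coefB : ℝ := g eOnes - ∑' n, coefA g n

variable (hg : ∀ x, |g x| ≤ ‖x‖)
include hg

lemma sum_coefA_le (N : ℕ) : ∑ n ∈ Finset.range N, |coefA g n| ≤ 1 := by
  set v : spaceC := ∑ n ∈ Finset.range N, Real.sign (coefA g n) • eC n with hv
  have hcoord : ∀ k, v.val k = if k ∈ Finset.range N then Real.sign (coefA g k) else 0 := by
    intro k
    have : v.val k = coordL k v := rfl
    rw [this, hv, map_sum]
    have : ∀ n ∈ Finset.range N,
        coordL k (Real.sign (coefA g n) • eC n) = if k = n then Real.sign (coefA g n) else 0 := by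
      intro n _
      rw [map_smul]
      simp only [coordL_apply, eC_apply, smul_eq_mul]
      split <;> ring
    rw [Finset.sum_congr rfl this, Finset.sum_ite_eq (Finset.range N) k
      (fun n => Real.sign (coefA g n))]
  have hnv : ‖v‖ ≤ 1 := by
    apply normC_le _ zero_le_one
    intro n
    rw [hcoord n]
    split
    · exact abs_sign_le _
    · simp
  have hgv : g v = ∑ n ∈ Finset.range N, |coefA g n| := by
    rw [hv, map_sum]
    congr 1
    funext n
    rw [map_smul, smul_eq_mul]
    have : g (eC n) = coefA g n := rfl
    rw [this, mul_comm, mul_sign_self]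
  calc ∑ n ∈ Finset.range N, |coefA g n| = g v := hgv.symm
    _ ≤ |g v| := le_abs_self _
    _ ≤ ‖v‖ := hg v
    _ ≤ 1 := hnv

lemma summable_abs_coefA : Summable (fun n => |coefA g n|) :=
  summable_of_sum_range_le (fun n => abs_nonneg _) (sum_coefA_le g hg)

lemma tsum_abs_coefA_le : ∑' n, |coefA g n| ≤ 1 :=
  Summable.tsum_le_of_sum_range_le (summable_abs_coefA g hg) (sum_coefA_le g hg)

lemma summable_coefA_mul (x : spaceC) : Summable (fun n => coefA g n * x.val n) := by
  have h1 : Summable (fun n => |coefA g n| * ‖x‖) := (summable_abs_coefA g hg).mul_right _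
  refine (Summable.of_nonneg_of_le (fun n => abs_nonneg _) (fun n => ?_) h1).of_abs
  rw [abs_mul]
  exact mul_le_mul_of_nonneg_left (apply_le_norm x n) (abs_nonneg _)

/-- The representation of a norm-bounded functional on c. -/
theorem repr (x : spaceC) :
    g x = (∑' n, coefA g n * x.val n) + coefB g * cLim x := by
  classical
  set a := coefA g with ha
  set l := cLim x with hl
  -- summability of the shifted series
  have hsum : Summable (fun n => (x.val n - l) * a n) := by
    have h1 : Summable (fun n => (‖x‖ + |l|) * |a n|) := (summable_abs_coefA g hg).mul_left _
    refine (Summable.of_nonneg_of_le (fun n => abs_nonneg _) (fun n => ?_) h1).of_abs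
    rw [abs_mul]
    exact mul_le_mul_of_nonneg_right
      ((abs_sub _ _).trans (add_le_add (apply_le_norm x n) le_rfl)) (abs_nonneg _)
  -- the error terms tend to zero
  have key : Filter.Tendsto
      (fun N => g x - l * g eOnes - ∑ n ∈ Finset.range N, (x.val n - l) * a n)
      Filter.atTop (nhds 0) := by
    rw [Metric.tendsto_atTop]
    intro ε hε
    obtain ⟨N₀, hN₀⟩ := (Metric.tendsto_atTop.1 (cLim_spec x)) (ε/2) (by linarith)
    refine ⟨N₀, fun N hN => ?_⟩
    set y : spaceC := x - l • eOnes - ∑ n ∈ Finset.range N, (x.val n - l) • eC n with hy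
    have hval : ∀ k, y.val k =
        x.val k - l - (if k ∈ Finset.range N then x.val k - l else 0) := by
      intro k
      have : y.val k = coordL k y := rfl
      rw [this, hy, map_sub, map_sub, map_smul, map_sum]
      have : ∀ n ∈ Finset.range N,
          coordL k ((x.val n - l) • eC n) = if k = n then x.val n - l else 0 := by
        intro n _
        rw [map_smul]
        simp only [coordL_apply, eC_apply, smul_eq_mul]
        split <;> ring
      rw [Finset.sum_congr rfl this, Finset.sum_ite_eq]
      simp [smul_eq_mul]
    have hny : ‖y‖ ≤ ε/2 := by
      apply normC_le _ (by linarith)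
      intro k
      rw [hval k]
      by_cases hk : k ∈ Finset.range N
      · simp [hk, le_of_lt hε]
        linarith
      · simp only [hk, if_neg, if_false, sub_zero]
        have : k ≥ N₀ := le_trans hN (by simpa using Nat.le_of_not_lt (by simpa using hk))
        have := hN₀ k this
        rw [Real.dist_eq] at this
        exact le_of_lt this
    have hgy : g y = g x - l * g eOnes - ∑ n ∈ Finset.range N, (x.val n - l) * a n := by
      rw [hy, map_sub, map_sub, map_smul, map_sum, smul_eq_mul]
      congr 1
      congr 1
      funext n
      rw [map_smul, smul_eq_mul]
      rfl
    rw [Real.dist_eq, sub_zero, ← hgy]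
    exact lt_of_le_of_lt (le_trans (hg y) hny) (by linarith)
  -- conclude
  have h2 : Filter.Tendsto
      (fun N => g x - l * g eOnes - ∑ n ∈ Finset.range N, (x.val n - l) * a n)
      Filter.atTop (nhds (g x - l * g eOnes - ∑' n, (x.val n - l) * a n)) :=
    (tendsto_const_nhds.sub tendsto_const_nhds).sub hsum.hasSum.tendsto_sum_nat
  have h3 : g x - l * g eOnes - ∑' n, (x.val n - l) * a n = 0 :=
    tendsto_nhds_unique h2 key
  have h4 : ∑' n, (x.val n - l) * a n
      = (∑' n, a n * x.val n) - l * ∑' n, a n := by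
    have hs1 : Summable (fun n => a n * x.val n) := summable_coefA_mul g hg x
    have hs2 : Summable (fun n => l * a n) := ((summable_abs_coefA g hg).of_abs).mul_left l
    rw [show (fun n => (x.val n - l) * a n) = fun n => a n * x.val n - l * a n
      from funext fun n => by ring, Summable.tsum_sub hs1 hs2, tsum_mul_left]
  have hb : coefB g = g eOnes - ∑' n, a n := rfl
  rw [hb]
  have := h3
  rw [h4] at this
  have hlt : l * ∑' n, a n = ∑' n, l * a n := by
    rw [← tsum_mul_left]
  linarith [this]

end Rep
end CWork
namespace CWork

lemma abs_tsum_le {c : ℕ → ℝ} (hc : Summable fun n => |c n|) : |∑' n, c n| ≤ ∑' n, |c n| := by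
  have := norm_tsum_le_tsum_norm (f := c) (by simpa using hc)
  simpa using this

lemma eval_bound (c : ℕ → ℝ) (d : ℝ) (hc : Summable fun n => |c n|) (x : spaceC) :
    |(∑' n, c n * x.val n) + d * cLim x| ≤ ((∑' n, |c n|) + |d|) * ‖x‖ := by
  have hcx : Summable (fun n => |c n * x.val n|) := by
    refine Summable.of_nonneg_of_le (fun n => abs_nonneg _) (fun n => ?_) (hc.mul_right ‖x‖)
    rw [abs_mul]
    exact mul_le_mul_of_nonneg_left (apply_le_norm x n) (abs_nonneg _)
  have h1 : |∑' n, c n * x.val n| ≤ ∑' n, |c n| * ‖x‖ := by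
    refine le_trans (abs_tsum_le hcx) (Summable.tsum_le_tsum (fun n => ?_) hcx (hc.mul_right ‖x‖))
    rw [abs_mul]
    exact mul_le_mul_of_nonneg_left (apply_le_norm x n) (abs_nonneg _)
  rw [tsum_mul_right] at h1
  have h2 : |d * cLim x| ≤ |d| * ‖x‖ := by
    rw [abs_mul]
    exact mul_le_mul_of_nonneg_left (abs_cLim_le x) (abs_nonneg _)
  calc |(∑' n, c n * x.val n) + d * cLim x| ≤ |∑' n, c n * x.val n| + |d * cLim x| :=
        abs_add_le _ _
    _ ≤ (∑' n, |c n|) * ‖x‖ + |d| * ‖x‖ := add_le_add h1 h2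
    _ = ((∑' n, |c n|) + |d|) * ‖x‖ := by ring

section Rep2
variable (g : spaceC →ₗ[ℝ] ℝ) (hg : ∀ x, |g x| ≤ ‖x‖)
include hg

lemma total_mass_le : (∑' n, |coefA g n|) + |coefB g| ≤ 1 := by
  classical
  set a := coefA g with ha
  set b := coefB g with hb
  have hsa := summable_abs_coefA g hg
  -- test vectors
  have main : ∀ N : ℕ,
      (∑ n ∈ Finset.range N, |a n|) + |b| ≤ 1 + ∑' k, |a (k + N)| := by
    intro N
    set f : ℕ → ℝ := fun n => if n < N then Real.sign (a n) else Real.sign b with hf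
    have hfb : ∀ n, |f n| ≤ 1 := by
      intro n; rw [hf]; dsimp only; split <;> exact abs_sign_le _
    have hftend : Filter.Tendsto f Filter.atTop (nhds (Real.sign b)) := by
      refine tendsto_const_nhds.congr' ?_
      filter_upwards [eventually_ge_atTop N] with n hn
      rw [hf]; simp [Nat.not_lt.2 hn]
    set v : spaceC := mkC f 1 hfb hftend with hv
    have hlim : cLim v = Real.sign b := cLim_eq hftend
    have hnv : ‖v‖ ≤ 1 := norm_mkC_le _ _ zero_le_one _ _
    have hsum : Summable (fun n => a n * v.val n) := by
      refine Summable.of_nonneg_of_le (fun n => abs_nonneg _)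
        (fun n => ?_) hsa |>.of_abs
      rw [abs_mul]
      calc |a n| * |v.val n| ≤ |a n| * 1 :=
            mul_le_mul_of_nonneg_left (by rw [hv, mkC_apply]; exact hfb n) (abs_nonneg _)
        _ = |a n| := mul_one _
    have hgv : g v = (∑' n, a n * v.val n) + b * Real.sign b := by
      rw [repr g hg v, hlim]
    have hsplit : ∑' n, a n * v.val n
        = (∑ n ∈ Finset.range N, |a n|) + ∑' k, a (k + N) * Real.sign b := by
      rw [← Summable.sum_add_tsum_nat_add N hsum]
      congr 1
      · refine Finset.sum_congr rfl fun n hn => ?_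
        have : v.val n = Real.sign (a n) := by
          rw [hv, mkC_apply, hf]; simp [Finset.mem_range.1 hn]
        rw [this, mul_sign_self]
      · refine tsum_congr fun k => ?_
        have : v.val (k + N) = Real.sign b := by
          rw [hv, mkC_apply, hf]; simp
        rw [this]
    have htail : |∑' k, a (k + N) * Real.sign b| ≤ ∑' k, |a (k + N)| := by
      have hsum2 : Summable (fun k => |a (k + N) * Real.sign b|) := by
        refine Summable.of_nonneg_of_le (fun k => abs_nonneg _) (fun k => ?_)
          ((summable_nat_add_iff N).2 hsa)
        rw [abs_mul]
        calc |a (k + N)| * |Real.sign b| ≤ |a (k + N)| * 1 :=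
              mul_le_mul_of_nonneg_left (abs_sign_le _) (abs_nonneg _)
          _ = _ := mul_one _
      refine le_trans (abs_tsum_le hsum2) (Summable.tsum_le_tsum (fun k => ?_) hsum2
        ((summable_nat_add_iff N).2 hsa))
      rw [abs_mul]
      calc |a (k + N)| * |Real.sign b| ≤ |a (k + N)| * 1 :=
            mul_le_mul_of_nonneg_left (abs_sign_le _) (abs_nonneg _)
        _ = _ := mul_one _
    have habs : |g v| ≤ 1 := le_trans (hg v) hnv
    rw [hgv, hsplit, mul_sign_self] at habs
    have := abs_le.1 habs
    have h2 := neg_abs_le (∑' k, a (k + N) * Real.sign b)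
    linarith [htail, this.2, h2]
  -- take the limit
  have h1 : Filter.Tendsto (fun N => (∑ n ∈ Finset.range N, |a n|) + |b|)
      Filter.atTop (nhds ((∑' n, |a n|) + |b|)) :=
    (hsa.hasSum.tendsto_sum_nat).add tendsto_const_nhds
  have h2 : Filter.Tendsto (fun N => 1 + ∑' k, |a (k + N)|) Filter.atTop (nhds (1 + 0)) :=
    tendsto_const_nhds.add (tendsto_sum_nat_add (fun n => |a n|))
  have := le_of_tendsto_of_tendsto' h1 h2 main
  simpa using this

end Rep2
end CWork
namespace CWork

lemma tsum_split2 {f : ℕ → ℝ} (hf : Summable f) {i j : ℕ} (hij : i ≠ j) :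
    ∑' n, f n = f i + f j + ∑' n, (if n = i then 0 else if n = j then 0 else f n) := by
  classical
  have hfi : Summable (fun n => if n = i then 0 else f n) :=
    (hf.update i 0).congr fun n => Function.update_apply f i 0 n
  rw [Summable.tsum_eq_add_tsum_ite hf i, Summable.tsum_eq_add_tsum_ite hfi j, if_neg hij.symm]
  have h : ∀ n, (if n = j then 0 else if n = i then 0 else f n)
      = (if n = i then 0 else if n = j then 0 else f n) := by
    intro n; split_ifs <;> rfl
  rw [tsum_congr h, ← add_assoc]

lemma abs_add_sign {r t σ : ℝ} (hr : r ≠ 0) (ht : 0 ≤ t) (htr : t ≤ |r|)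
    (hσ : σ = 1 ∨ σ = -1) : |r + σ * t * Real.sign r| = |r| + σ * t := by
  have hσt : σ * t ≤ t ∧ -t ≤ σ * t := by
    rcases hσ with h | h <;> subst h <;> constructor <;> nlinarith
  rcases lt_or_gt_of_ne hr with h | h
  · have habs : |r| = -r := abs_of_neg h
    rw [Real.sign_of_neg h, habs, abs_of_nonpos (by nlinarith)]
    ring
  · have habs : |r| = r := abs_of_pos h
    rw [Real.sign_of_pos h, habs, abs_of_nonneg (by nlinarith)]
    ring

theorem slot (g : spaceC →ₗ[ℝ] ℝ) (hg : ∀ x, |g x| ≤ ‖x‖)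
    (hext : ∀ ψ : spaceC →ₗ[ℝ] ℝ, (∀ x, |g x + ψ x| ≤ ‖x‖) → (∀ x, |g x - ψ x| ≤ ‖x‖) →
      ψ = 0)
    (hmass : (∑' n, |coefA g n|) + |coefB g| = 1) :
    (∃ k, (coefA g k = 1 ∨ coefA g k = -1) ∧ ∀ x, g x = coefA g k * x.val k)
    ∨ ((coefB g = 1 ∨ coefB g = -1) ∧ ∀ x, g x = coefB g * cLim x) := by
  classical
  set a := coefA g with ha
  set b := coefB g with hb
  have hsa : Summable (fun n => |a n|) := summable_abs_coefA g hg
  have hsa' : Summable a := hsa.of_abs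
  have hmassle : (∑' n, |a n|) + |b| ≤ 1 := total_mass_le g hg
  -- step a: at most one nonzero coefficient among the a's
  have stepa : ∀ i j, i ≠ j → a i ≠ 0 → a j = 0 := by
    intro i j hij hi
    by_contra hj
    set t := min |a i| |a j| with htdef
    have ht0 : 0 < t := lt_min (abs_pos.2 hi) (abs_pos.2 hj)
    set si := Real.sign (a i) with hsi
    set sj := Real.sign (a j) with hsj
    set ψ : spaceC →ₗ[ℝ] ℝ := t • (si • coordL i - sj • coordL j) with hψ
    have hψx : ∀ x : spaceC, ψ x = t * (si * x.val i - sj * x.val j) := by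
      intro x
      rw [hψ]
      simp only [LinearMap.smul_apply, LinearMap.sub_apply, coordL_apply, smul_eq_mul]
    have bound : ∀ σ : ℝ, (σ = 1 ∨ σ = -1) → ∀ x, |g x + σ * ψ x| ≤ ‖x‖ := by
      intro σ hσ x
      set c : ℕ → ℝ := fun n =>
        if n = i then a i + σ * t * si else if n = j then a j + (-σ) * t * sj else a n with hc
      have hceq : c = fun n => a n +
          ((if n = i then σ * t * si else 0) + (if n = j then (-σ) * t * sj else 0)) := by
        funext n
        simp only [hc]
        by_cases hni : n = i
        · subst hni; rw [if_pos rfl, if_pos rfl, if_neg hij]; try ring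
        · by_cases hnj : n = j
          · subst hnj; rw [if_neg hni, if_pos rfl, if_neg hni, if_pos rfl]; try ring
          · rw [if_neg hni, if_neg hnj, if_neg hni, if_neg hnj]; try ring
      have hcs : Summable c := by
        rw [hceq]
        exact hsa'.add ((hasSum_ite_eq i (σ * t * si)).summable.add
          (hasSum_ite_eq j ((-σ) * t * sj)).summable)
      have habsc : Summable (fun n => |c n|) := hcs.abs
      have hval : g x + σ * ψ x = (∑' n, c n * x.val n) + b * cLim x := by
        rw [repr g hg x, hψx]
        have h1 : ∀ n : ℕ, c n * x.val n = a n * x.val n +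
            ((if n = i then σ * t * si * x.val i else 0)
              + (if n = j then (-σ) * t * sj * x.val j else 0)) := by
          intro n
          simp only [hc]
          by_cases hni : n = i
          · subst hni; rw [if_pos rfl, if_pos rfl, if_neg hij]; try ring
          · by_cases hnj : n = j
            · subst hnj; rw [if_neg hni, if_pos rfl, if_neg hni, if_pos rfl]; try ring
            · rw [if_neg hni, if_neg hnj, if_neg hni, if_neg hnj]; try ring
        rw [tsum_congr h1, Summable.tsum_add (summable_coefA_mul g hg x)
          ((hasSum_ite_eq i (σ * t * si * x.val i)).summable.add
            (hasSum_ite_eq j ((-σ) * t * sj * x.val j)).summable),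
          Summable.tsum_add (hasSum_ite_eq i (σ * t * si * x.val i)).summable
            (hasSum_ite_eq j ((-σ) * t * sj * x.val j)).summable,
          (hasSum_ite_eq i (σ * t * si * x.val i)).tsum_eq,
          (hasSum_ite_eq j ((-σ) * t * sj * x.val j)).tsum_eq]
        ring
      have hci : |c i| = |a i| + σ * t := by
        have : c i = a i + σ * t * si := by simp [hc]
        rw [this, hsi, abs_add_sign hi (le_of_lt ht0) (min_le_left _ _) hσ]
      have hcj : |c j| = |a j| + (-σ) * t := by
        have : c j = a j + (-σ) * t * sj := by simp [hc, Ne.symm hij]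
        rw [this, hsj, abs_add_sign hj (le_of_lt ht0) (min_le_right _ _)
          (by rcases hσ with h | h <;> subst h <;> simp)]
      have hmassc : (∑' n, |c n|) + |b| ≤ 1 := by
        have h2 : ∑' n, |c n| = ∑' n, |a n| := by
          rw [tsum_split2 habsc hij, tsum_split2 hsa hij]
          have hrest : ∀ n, (if n = i then 0 else if n = j then 0 else |c n|)
              = (if n = i then 0 else if n = j then 0 else |a n|) := by
            intro n
            split_ifs with h1 h2
            · rfl
            · rfl
            · simp only [hc]; rw [if_neg h1, if_neg h2]
          rw [tsum_congr hrest, hci, hcj]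
          ring
        rw [h2]; exact hmassle
      calc |g x + σ * ψ x| = |(∑' n, c n * x.val n) + b * cLim x| := by rw [hval]
        _ ≤ ((∑' n, |c n|) + |b|) * ‖x‖ := eval_bound c b habsc x
        _ ≤ 1 * ‖x‖ := mul_le_mul_of_nonneg_right hmassc (norm_nonneg x)
        _ = ‖x‖ := one_mul _
    have hψ0 : ψ = 0 := by
      refine hext ψ (fun x => ?_) (fun x => ?_)
      · have := bound 1 (Or.inl rfl) x
        rw [one_mul] at this
        exact this
      · have := bound (-1) (Or.inr rfl) x
        rw [neg_one_mul, ← sub_eq_add_neg] at this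
        exact this
    have hval : ψ (eC i) = t * si := by
      rw [hψx]
      rw [eC_apply, eC_apply, if_pos rfl, if_neg (fun h : j = i => hij h.symm)]
      ring
    rw [hψ0] at hval
    simp only [LinearMap.zero_apply] at hval
    have hsi0 : si ≠ 0 := by rw [hsi]; exact fun h => hi (Real.sign_eq_zero_iff.1 h)
    exact hsi0 (by nlinarith [hval])
  -- step b: if some a i ≠ 0 then b = 0
  have stepb : ∀ i, a i ≠ 0 → b = 0 := by
    intro i hi
    by_contra hbne
    set t := min |a i| |b| with htdef
    have ht0 : 0 < t := lt_min (abs_pos.2 hi) (abs_pos.2 hbne)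
    set si := Real.sign (a i) with hsi
    set sb := Real.sign b with hsb
    set ψ : spaceC →ₗ[ℝ] ℝ := t • (si • coordL i - sb • limL) with hψ
    have hψx : ∀ x : spaceC, ψ x = t * (si * x.val i - sb * cLim x) := by
      intro x
      rw [hψ]
      simp only [LinearMap.smul_apply, LinearMap.sub_apply, coordL_apply, limL_apply,
        smul_eq_mul]
    have bound : ∀ σ : ℝ, (σ = 1 ∨ σ = -1) → ∀ x, |g x + σ * ψ x| ≤ ‖x‖ := by
      intro σ hσ x
      set c : ℕ → ℝ := fun n => if n = i then a i + σ * t * si else a n with hc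
      set d : ℝ := b + (-σ) * t * sb with hd
      have hceq : c = fun n => a n + (if n = i then σ * t * si else 0) := by
        funext n
        simp only [hc]
        by_cases hni : n = i
        · subst hni; rw [if_pos rfl, if_pos rfl]; try ring
        · rw [if_neg hni, if_neg hni]; try ring
      have hcs : Summable c := by
        rw [hceq]
        exact hsa'.add (hasSum_ite_eq i (σ * t * si)).summable
      have habsc : Summable (fun n => |c n|) := hcs.abs
      have hval : g x + σ * ψ x = (∑' n, c n * x.val n) + d * cLim x := by
        rw [repr g hg x, hψx, hd]
        have h1 : ∀ n : ℕ, c n * x.val n = a n * x.val n +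
            (if n = i then σ * t * si * x.val i else 0) := by
          intro n
          simp only [hc]
          by_cases hni : n = i
          · subst hni; rw [if_pos rfl, if_pos rfl]; try ring
          · rw [if_neg hni, if_neg hni]; try ring
        rw [tsum_congr h1, Summable.tsum_add (summable_coefA_mul g hg x)
          (hasSum_ite_eq i (σ * t * si * x.val i)).summable,
          (hasSum_ite_eq i (σ * t * si * x.val i)).tsum_eq]
        ring
      have hci : |c i| = |a i| + σ * t := by
        have : c i = a i + σ * t * si := by simp [hc]
        rw [this, hsi, abs_add_sign hi (le_of_lt ht0) (min_le_left _ _) hσ]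
      have hdabs : |d| = |b| + (-σ) * t := by
        rw [hd, hsb, abs_add_sign hbne (le_of_lt ht0) (min_le_right _ _)
          (by rcases hσ with h | h <;> subst h <;> simp)]
      have hmassc : (∑' n, |c n|) + |d| ≤ 1 := by
        have h2 : ∑' n, |c n| = (∑' n, |a n|) + σ * t := by
          rw [Summable.tsum_eq_add_tsum_ite habsc i, Summable.tsum_eq_add_tsum_ite hsa i]
          have hrest : ∀ n, (if n = i then 0 else |c n|) = (if n = i then 0 else |a n|) := by
            intro n
            split_ifs with h1
            · rfl
            · simp only [hc]; rw [if_neg h1]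
          rw [tsum_congr hrest, hci]
          ring
        rw [h2, hdabs]
        have : (∑' n, |a n|) + σ * t + (|b| + (-σ) * t) = (∑' n, |a n|) + |b| := by ring
        rw [this]
        exact hmassle
      calc |g x + σ * ψ x| = |(∑' n, c n * x.val n) + d * cLim x| := by rw [hval]
        _ ≤ ((∑' n, |c n|) + |d|) * ‖x‖ := eval_bound c d habsc x
        _ ≤ 1 * ‖x‖ := mul_le_mul_of_nonneg_right hmassc (norm_nonneg x)
        _ = ‖x‖ := one_mul _
    have hψ0 : ψ = 0 := by
      refine hext ψ (fun x => ?_) (fun x => ?_)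
      · have := bound 1 (Or.inl rfl) x
        rw [one_mul] at this
        exact this
      · have := bound (-1) (Or.inr rfl) x
        rw [neg_one_mul, ← sub_eq_add_neg] at this
        exact this
    have hval : ψ (eC i) = t * si := by
      rw [hψx, eC_apply, if_pos rfl, cLim_eC]
      ring
    rw [hψ0] at hval
    simp only [LinearMap.zero_apply] at hval
    have hsi0 : si ≠ 0 := by rw [hsi]; exact fun h => hi (Real.sign_eq_zero_iff.1 h)
    exact hsi0 (by nlinarith [hval])
  -- conclude
  by_cases hex : ∃ i, a i ≠ 0
  · obtain ⟨i, hi⟩ := hex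
    left
    have hzero : ∀ j, j ≠ i → a j = 0 := fun j hj => stepa i j (fun h => hj h.symm) hi
    have hb0 : b = 0 := stepb i hi
    have htsum : ∑' n, |a n| = |a i| := by
      refine tsum_eq_single i fun j hj => ?_
      rw [hzero j hj, abs_zero]
    have hai : |a i| = 1 := by
      rw [htsum, hb0, abs_zero, add_zero] at hmass
      exact hmass
    refine ⟨i, abs_eq (by norm_num) |>.1 hai, fun x => ?_⟩
    rw [repr g hg x, ← ha, ← hb, hb0, zero_mul, add_zero]
    refine tsum_eq_single i fun j hj => ?_
    rw [hzero j hj, zero_mul]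
  · push_neg at hex
    right
    have htsum : ∑' n, |a n| = 0 := by
      have : ∀ n, |a n| = 0 := fun n => by rw [hex n, abs_zero]
      rw [tsum_congr this, tsum_zero]
    have hbabs : |b| = 1 := by rw [htsum, zero_add] at hmass; exact hmass
    refine ⟨abs_eq (by norm_num) |>.1 hbabs, fun x => ?_⟩
    rw [repr g hg x, ← ha, ← hb]
    have : ∀ n, a n * x.val n = 0 := fun n => by rw [hex n, zero_mul]
    rw [tsum_congr this, tsum_zero, zero_add]

end CWork
namespace CWork

lemma val_sub (x y : spaceC) (n : ℕ) : (x - y).val n = x.val n - y.val n := by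
  have := (coordL n).map_sub x y
  simpa using this

lemma zero_of_val {x : spaceC} (h : ∀ n, x.val n = 0) : x = 0 :=
  Subtype.ext (lp.ext (funext fun n => by simpa using h n))

lemma coord_extreme (m : ℕ) (h₁ h₂ : spaceC →ₗ[ℝ] ℝ)
    (b₁ : ∀ x, |h₁ x| ≤ ‖x‖) (b₂ : ∀ x, |h₂ x| ≤ ‖x‖)
    (hsum : ∀ x, h₁ x + h₂ x = 2 * x.val m) :
    ∀ x : spaceC, h₁ x = x.val m ∧ h₂ x = x.val m := by
  have key : ∀ x : spaceC, ‖x‖ ≤ 1 → x.val m = 1 → h₁ x = 1 ∧ h₂ x = 1 := by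
    intro x hx hxm
    have e1 := abs_le.1 ((b₁ x).trans hx)
    have e2 := abs_le.1 ((b₂ x).trans hx)
    have hs := hsum x
    rw [hxm] at hs
    constructor <;> linarith [e1.1, e1.2, e2.1, e2.2]
  have hm : h₁ (eC m) = 1 ∧ h₂ (eC m) = 1 := by
    refine key (eC m) (norm_eC_le m) ?_
    rw [eC_apply, if_pos rfl]
  have hzero : ∀ y : spaceC, y.val m = 0 → ‖y‖ ≤ 1 → h₁ y = 0 ∧ h₂ y = 0 := by
    intro y hym hy1
    have hnorm : ‖eC m + y‖ ≤ 1 := by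
      refine normC_le _ zero_le_one fun k => ?_
      rw [val_add, eC_apply]
      by_cases hk : k = m
      · subst hk
        rw [if_pos rfl, hym]
        norm_num
      · rw [if_neg hk, zero_add]
        exact (apply_le_norm y k).trans hy1
    have hcoord : (eC m + y).val m = 1 := by
      rw [val_add, eC_apply, if_pos rfl, hym, add_zero]
    have hk := key (eC m + y) hnorm hcoord
    have e1 : h₁ (eC m) + h₁ y = 1 := by rw [← map_add]; exact hk.1
    have e2 : h₂ (eC m) + h₂ y = 1 := by rw [← map_add]; exact hk.2
    constructor <;> linarith [hm.1, hm.2]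
  intro z
  set y : spaceC := z - z.val m • eC m with hy
  have hym : y.val m = 0 := by
    rw [hy, val_sub, val_smul, eC_apply, if_pos rfl, mul_one, sub_self]
  have hynorm : ‖y‖ ≤ 2 * ‖z‖ := by
    rw [hy]
    calc ‖z - z.val m • eC m‖ ≤ ‖z‖ + ‖z.val m • eC m‖ := norm_sub_le _ _
      _ ≤ ‖z‖ + |z.val m| * 1 := by
          rw [norm_smul, Real.norm_eq_abs]
          exact add_le_add le_rfl (mul_le_mul_of_nonneg_left (norm_eC_le m) (abs_nonneg _))
      _ ≤ ‖z‖ + ‖z‖ := by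
          rw [mul_one]
          exact add_le_add le_rfl (apply_le_norm z m)
      _ = 2 * ‖z‖ := by ring
  set c : ℝ := (2 * ‖z‖ + 1)⁻¹ with hc
  have hc0 : 0 < (2 * ‖z‖ + 1) := by positivity
  have hcpos : 0 < c := by rw [hc]; positivity
  have hcy_norm : ‖c • y‖ ≤ 1 := by
    rw [norm_smul, Real.norm_eq_abs, abs_of_pos hcpos, hc]
    rw [inv_mul_le_iff₀ hc0, mul_one]
    linarith [norm_nonneg z]
  have hcy_m : (c • y).val m = 0 := by rw [val_smul, hym, mul_zero]
  have h0 := hzero (c • y) hcy_m hcy_norm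
  have hy1 : h₁ y = 0 := by
    have : c * h₁ y = 0 := by
      rw [← smul_eq_mul, ← map_smul]; exact h0.1
    exact (mul_eq_zero.1 this).resolve_left (ne_of_gt hcpos)
  have hy2 : h₂ y = 0 := by
    have : c * h₂ y = 0 := by
      rw [← smul_eq_mul, ← map_smul]; exact h0.2
    exact (mul_eq_zero.1 this).resolve_left (ne_of_gt hcpos)
  have hz : z = y + z.val m • eC m := by rw [hy]; abel
  constructor
  · rw [hz, map_add, map_smul, smul_eq_mul, hy1, hm.1, zero_add, mul_one]
    rw [val_add, hym, val_smul, eC_apply, if_pos rfl, mul_one, zero_add]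
  · rw [hz, map_add, map_smul, smul_eq_mul, hy2, hm.2, zero_add, mul_one]
    rw [val_add, hym, val_smul, eC_apply, if_pos rfl, mul_one, zero_add]

end CWork

open CWork

/-- Every surjective linear isometry of `c` is a signed permutation of the
coordinates. -/
theorem c_isometry_standard (T : spaceC →ₗ[ℝ] spaceC)
    (hiso : Isometry T) (hsurj : Function.Surjective T) :
    ∃ (ε : ℕ → ℝ) (π : Equiv.Perm ℕ), (∀ n, ε n = 1 ∨ ε n = -1) ∧
      ∀ (a : spaceC) (n : ℕ), (T a).val n = ε n * a.val (π n) := by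
  classical
  have hTnorm : ∀ x : spaceC, ‖T x‖ = ‖x‖ := fun x =>
    hiso.norm_map_of_map_zero (map_zero T) x
  have hinj : Function.Injective T := hiso.injective
  set Teq := LinearEquiv.ofBijective T ⟨hinj, hsurj⟩ with hTeqdef
  have hTinv : ∀ y, T (Teq.symm y) = y := fun y => Teq.apply_symm_apply y
  have hTinvnorm : ∀ y, ‖Teq.symm y‖ = ‖y‖ := fun y => by
    rw [← hTnorm (Teq.symm y), hTinv]
  set φ : ℕ → (spaceC →ₗ[ℝ] ℝ) := fun m => (coordL m).comp T with hφdef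
  have hφ_app : ∀ m x, φ m x = (T x).val m := fun m x => rfl
  have hφ_bdd : ∀ m x, |φ m x| ≤ ‖x‖ := fun m x => by
    rw [hφ_app]
    exact (apply_le_norm (T x) m).trans (le_of_eq (hTnorm x))
  -- each φ m is an extreme functional: apply the slot theorem
  have hslot : ∀ m,
      (∃ k, (coefA (φ m) k = 1 ∨ coefA (φ m) k = -1) ∧ ∀ x, φ m x = coefA (φ m) k * x.val k)
      ∨ ((coefB (φ m) = 1 ∨ coefB (φ m) = -1) ∧ ∀ x, φ m x = coefB (φ m) * cLim x) := by
    intro m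
    refine slot (φ m) (hφ_bdd m) ?_ ?_
    · -- extremality
      intro ψ hp hq
      set h₁ : spaceC →ₗ[ℝ] ℝ := (φ m + ψ).comp (Teq.symm : spaceC →ₗ[ℝ] spaceC) with h1def
      set h₂ : spaceC →ₗ[ℝ] ℝ := (φ m - ψ).comp (Teq.symm : spaceC →ₗ[ℝ] spaceC) with h2def
      have hb₁ : ∀ y, |h₁ y| ≤ ‖y‖ := by
        intro y
        have := hp (Teq.symm y)
        rw [← hTinvnorm y]
        exact this
      have hb₂ : ∀ y, |h₂ y| ≤ ‖y‖ := by
        intro y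
        have := hq (Teq.symm y)
        rw [← hTinvnorm y]
        exact this
      have hsum : ∀ y : spaceC, h₁ y + h₂ y = 2 * y.val m := by
        intro y
        have h1 : h₁ y = φ m (Teq.symm y) + ψ (Teq.symm y) := rfl
        have h2 : h₂ y = φ m (Teq.symm y) - ψ (Teq.symm y) := rfl
        rw [h1, h2, hφ_app, hTinv]
        ring
      have hext := coord_extreme m h₁ h₂ hb₁ hb₂ hsum
      ext x
      have hx1 := (hext (T x)).1
      have hx2 := (hext (T x)).2
      have hsymmx : Teq.symm (T x) = x := Teq.symm_apply_apply x
      have e1 : h₁ (T x) = φ m x + ψ x := by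
        have : h₁ (T x) = φ m (Teq.symm (T x)) + ψ (Teq.symm (T x)) := rfl
        rw [this, hsymmx]
      have e2 : h₂ (T x) = φ m x - ψ x := by
        have : h₂ (T x) = φ m (Teq.symm (T x)) - ψ (Teq.symm (T x)) := rfl
        rw [this, hsymmx]
      rw [e1] at hx1
      rw [e2] at hx2
      have : φ m x = (T x).val m := hφ_app m x
      simp only [LinearMap.zero_apply]
      linarith [hx1, hx2, this]
    · -- total mass is 1
      refine le_antisymm (total_mass_le _ (hφ_bdd m)) ?_
      set x₀ := Teq.symm (eC m) with hx₀
      have hval : φ m x₀ = 1 := by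
        rw [hφ_app, hx₀, hTinv, eC_apply, if_pos rfl]
      have hnorm : ‖x₀‖ ≤ 1 := by rw [hx₀, hTinvnorm]; exact norm_eC_le m
      have hmass_nonneg : 0 ≤ (∑' n, |coefA (φ m) n|) + |coefB (φ m)| := by
        have : 0 ≤ ∑' n, |coefA (φ m) n| :=
          tsum_nonneg fun n => abs_nonneg _
        positivity
      have hb := eval_bound (coefA (φ m)) (coefB (φ m))
        (summable_abs_coefA _ (hφ_bdd m)) x₀
      rw [← repr _ (hφ_bdd m) x₀, hval] at hb
      calc (1:ℝ) = |1| := by norm_num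
        _ ≤ ((∑' n, |coefA (φ m) n|) + |coefB (φ m)|) * ‖x₀‖ := hb
        _ ≤ ((∑' n, |coefA (φ m) n|) + |coefB (φ m)|) * 1 :=
            mul_le_mul_of_nonneg_left hnorm hmass_nonneg
        _ = _ := mul_one _
  -- eliminate the limit-type case
  have hcoord : ∀ m, ∃ kk εε, (εε = 1 ∨ εε = -1) ∧ ∀ x, φ m x = εε * x.val kk := by
    intro m
    rcases hslot m with ⟨kk, hε, hf⟩ | ⟨hε, hf⟩
    · exact ⟨kk, _, hε, hf⟩
    exfalso
    set b₀ := coefB (φ m) with hb₀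
    -- all other coordinates are of coordinate type
    have hothers : ∀ m', m' ≠ m → ∃ kk εε, (εε = 1 ∨ εε = -1) ∧
        ∀ x, φ m' x = εε * x.val kk := by
      intro m' hm'
      rcases hslot m' with ⟨kk, hε', hf'⟩ | ⟨hε', hf'⟩
      · exact ⟨kk, _, hε', hf'⟩
      exfalso
      have hy : ∀ y : spaceC, coefB (φ m') * y.val m = b₀ * y.val m' := by
        intro y
        obtain ⟨x, rfl⟩ := hsurj y
        have e1 : (T x).val m = b₀ * cLim x := hf x
        have e2 : (T x).val m' = coefB (φ m') * cLim x := hf' x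
        rw [e1, e2]
        ring
      have := hy (eC m)
      rw [eC_apply, if_pos rfl, eC_apply, if_neg hm', mul_one, mul_zero] at this
      rcases hε' with h | h <;> rw [h] at this <;> norm_num at this
    choose kk εε hεε hff using hothers
    by_cases hcov : ∀ j : ℕ, ∃ m', ∃ h : m' ≠ m, kk m' h = j
    · -- every coordinate is hit: T⁻¹ (eC m) is the zero sequence yet has limit ±1
      set x := Teq.symm (eC m) with hx
      have hxc : ∀ j, x.val j = 0 := by
        intro j
        obtain ⟨m', hm', hkj⟩ := hcov j
        have h1 : φ m' x = εε m' hm' * x.val (kk m' hm') := hff m' hm' x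
        have h2 : φ m' x = 0 := by
          rw [hφ_app, hx, hTinv, eC_apply, if_neg hm']
        rw [h2, hkj] at h1
        rcases hεε m' hm' with h | h <;> rw [h] at h1 <;> linarith [h1]
      have hL : cLim x = 0 := by
        refine cLim_eq ?_
        have : (fun n => x.val n) = fun _ => (0:ℝ) := funext fun n => hxc n
        rw [this]
        exact tendsto_const_nhds
      have h1 : φ m x = b₀ * cLim x := hf x
      have h2 : φ m x = 1 := by
        rw [hφ_app, hx, hTinv, eC_apply, if_pos rfl]
      rw [h2, hL, mul_zero] at h1
      norm_num at h1
    · push_neg at hcov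
      obtain ⟨j, hj⟩ := hcov
      have hTz : T (eC j) = 0 := by
        refine zero_of_val fun n => ?_
        by_cases hn : n = m
        · subst hn
          have : φ n (eC j) = b₀ * cLim (eC j) := hf (eC j)
          rw [hφ_app, cLim_eC, mul_zero] at this
          exact this
        · have h1 : φ n (eC j) = εε n hn * (eC j).val (kk n hn) := hff n hn (eC j)
          rw [hφ_app] at h1
          rw [h1, eC_apply, if_neg (hj n hn), mul_zero]
      have : eC j = 0 := hinj (by rw [hTz, map_zero])
      have hval : (eC j).val j = 1 := by rw [eC_apply, if_pos rfl]
      rw [this] at hval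
      simp [val_zero] at hval
  -- extract the permutation
  choose k ε hε hf using hcoord
  have hy_eval : ∀ m (y : spaceC), y.val m = ε m * (Teq.symm y).val (k m) := by
    intro m y
    have := hf m (Teq.symm y)
    rw [hφ_app, hTinv] at this
    exact this
  have kinj : Function.Injective k := by
    intro m m' hkm
    by_contra hne
    have key : ∀ y : spaceC, ε m' * y.val m = ε m * y.val m' := by
      intro y
      rw [hy_eval m y, hy_eval m' y, hkm]
      ring
    have := key (eC m)
    rw [eC_apply, if_pos rfl, eC_apply, if_neg (fun h : m' = m => hne h.symm),
      mul_one, mul_zero] at this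
    rcases hε m' with h | h <;> rw [h] at this <;> norm_num at this
  have ksurj : Function.Surjective k := by
    intro j
    by_contra hj
    push_neg at hj
    have hTz : T (eC j) = 0 := by
      refine zero_of_val fun n => ?_
      have h1 : φ n (eC j) = ε n * (eC j).val (k n) := hf n (eC j)
      rw [hφ_app] at h1
      rw [h1, eC_apply, if_neg (hj n), mul_zero]
    have : eC j = 0 := hinj (by rw [hTz, map_zero])
    have hval : (eC j).val j = 1 := by rw [eC_apply, if_pos rfl]
    rw [this] at hval
    simp [val_zero] at hval
  refine ⟨ε, Equiv.ofBijective k ⟨kinj, ksurj⟩, hε, fun a n => ?_⟩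
  have := hf n a
  rw [hφ_app] at this
  exact this
end

section
/- If T : c₀ → c₀ is a surjective linear isometry, then for every j ∈ ℕ there is k ∈ ℕ with T(eⱼ) = e_k or T(eⱼ) = −e_k. -/
/-!
Let `lens x = {y | ‖y - x‖ ≤ 1 ∧ ‖y + x‖ ≤ 1}`. In `c₀`, `y ∈ lens x` iff `|y n| + |x n| ≤ 1` for
all `n`, so for `‖x‖ ≤ 1` inclusion of lenses reverses the pointwise order of absolute values. A
unit vector attains its norm at some `k`, so its lens lies inside that of `eₖ`: the lenses of the
`±eₖ` are the maximal lenses of unit vectors, and `±eₖ` is determined by its lens. A surjective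
linear isometry preserves lenses and their inclusions, so it maps `eⱼ` to some `±eₖ`.
-/

open scoped ZeroAtInfty

/-- The `j`-th standard unit vector of `c₀`. -/
noncomputable def stdUnitVec (j : ℕ) : C₀(ℕ, ℝ) where
  toFun := Pi.single j 1
  continuous_toFun := continuous_of_discreteTopology
  zero_at_infty' := by
    have h : (fun _ : ℕ => (0 : ℝ)) =ᶠ[Filter.cocompact ℕ] Pi.single j (1 : ℝ) := by
      rw [cocompact_eq_atTop (α := ℕ)]
      filter_upwards [Filter.eventually_gt_atTop j] with n hn
      exact (Pi.single_eq_of_ne (M := fun _ : ℕ => ℝ) hn.ne' 1).symm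
    exact Filter.Tendsto.congr' h tendsto_const_nhds

open Metric

section Lens

variable {E F 𝓕 : Type*} [SeminormedAddCommGroup E] [SeminormedAddCommGroup F]

def lens (x : E) : Set E := closedBall x 1 ∩ closedBall (-x) 1

lemma mem_lens {x y : E} : y ∈ lens x ↔ ‖y - x‖ ≤ 1 ∧ ‖y + x‖ ≤ 1 := by
  simp [lens, dist_eq_norm]

variable [FunLike 𝓕 E F] [AddMonoidHomClass 𝓕 E F] {T : 𝓕}

lemma preimage_lens (hT : Isometry T) (x : E) : T ⁻¹' lens (T x) = lens x := by
  rw [lens, Set.preimage_inter, ← map_neg, hT.preimage_closedBall, hT.preimage_closedBall, lens]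

lemma lens_map_subset_lens_map_iff (hT : Isometry T) (hsurj : Function.Surjective T) (x y : E) :
    lens (T x) ⊆ lens (T y) ↔ lens x ⊆ lens y := by
  rw [← preimage_lens hT x, ← preimage_lens hT y, hsurj.preimage_subset_preimage_iff]

end Lens

lemma abs_add_abs_le_iff {a b c : ℝ} : |a| + |b| ≤ c ↔ |a - b| ≤ c ∧ |a + b| ≤ c := by
  refine ⟨fun h => ⟨(abs_sub a b).trans h, (abs_add_le a b).trans h⟩, fun ⟨hsub, hadd⟩ => ?_⟩
  obtain ⟨h₁, h₂⟩ := abs_le.1 hsub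
  obtain ⟨h₃, h₄⟩ := abs_le.1 hadd
  rcases abs_cases a with ⟨ha, -⟩ | ⟨ha, -⟩ <;> rcases abs_cases b with ⟨hb, -⟩ | ⟨hb, -⟩ <;>
    linarith

namespace ZeroAtInftyContinuousMap

variable {α β : Type*} [TopologicalSpace α]

lemma norm_apply_le [SeminormedAddCommGroup β] (f : C₀(α, β)) (a : α) : ‖f a‖ ≤ ‖f‖ :=
  norm_toBCF_eq_norm (f := f) ▸ f.toBCF.norm_coe_le_norm a

lemma norm_le_iff [SeminormedAddCommGroup β] {f : C₀(α, β)} {C : ℝ} (hC : 0 ≤ C) :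
    ‖f‖ ≤ C ↔ ∀ a, ‖f a‖ ≤ C :=
  norm_toBCF_eq_norm (f := f) ▸ BoundedContinuousFunction.norm_le hC

lemma exists_norm_apply_eq_norm [NormedAddCommGroup β] {f : C₀(α, β)} (hf : f ≠ 0) :
    ∃ a, ‖f a‖ = ‖f‖ := by
  obtain ⟨a₀, ha₀⟩ : ∃ a₀, f a₀ ≠ 0 := by
    by_contra! h
    exact hf (ext h)
  have hsmall : ∀ᶠ a in Filter.cocompact α, ‖f a‖ ≤ ‖f a₀‖ :=
    (zero_at_infty f).norm.eventually (ge_mem_nhds (by simpa using norm_pos_iff.2 ha₀))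
  obtain ⟨a, ha⟩ := (map_continuous f).norm.exists_forall_ge' a₀ hsmall
  exact ⟨a, (norm_apply_le f a).antisymm ((norm_le_iff (norm_nonneg _)).2 ha)⟩

lemma mem_lens_iff {x y : C₀(α, ℝ)} : y ∈ lens x ↔ ∀ a, |y a| + |x a| ≤ 1 := by
  simp only [mem_lens, norm_le_iff zero_le_one, coe_sub, coe_add, Pi.sub_apply, Pi.add_apply,
    Real.norm_eq_abs, abs_add_abs_le_iff, forall_and]

lemma lens_subset_lens_of_abs_le {x x' : C₀(α, ℝ)} (h : ∀ a, |x' a| ≤ |x a|) :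
    lens x ⊆ lens x' := fun _ hy =>
  mem_lens_iff.2 fun a => (add_le_add_right (h a) _).trans (mem_lens_iff.1 hy a)

end ZeroAtInftyContinuousMap

open ZeroAtInftyContinuousMap

lemma stdUnitVec_apply (j n : ℕ) : stdUnitVec j n = if n = j then 1 else 0 :=
  Pi.single_apply j 1 n

lemma norm_stdUnitVec (j : ℕ) : ‖stdUnitVec j‖ = 1 := by
  refine le_antisymm ((norm_le_iff zero_le_one).2 fun n => ?_) ?_
  · rw [stdUnitVec_apply]; split_ifs <;> simp
  · simpa [stdUnitVec_apply] using norm_apply_le (stdUnitVec j) j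

lemma lens_subset_lens_iff {x x' : C₀(ℕ, ℝ)} (hx : ‖x‖ ≤ 1) :
    lens x ⊆ lens x' ↔ ∀ n, |x' n| ≤ |x n| := by
  refine ⟨fun h n => ?_, lens_subset_lens_of_abs_le⟩
  have hxn : |x n| ≤ 1 := (norm_apply_le x n).trans hx
  -- the largest multiple of `eₙ` in `lens x`
  have hy : (1 - |x n|) • stdUnitVec n ∈ lens x := by
    refine mem_lens_iff.2 fun m => ?_
    rcases eq_or_ne m n with rfl | hmn
    · simp [stdUnitVec_apply, abs_of_nonneg (sub_nonneg.2 hxn)]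
    · simpa [stdUnitVec_apply, hmn] using (norm_apply_le x m).trans hx
  have := mem_lens_iff.1 (h hy) n
  simp only [coe_smul, Pi.smul_apply, stdUnitVec_apply, if_pos, smul_eq_mul, mul_one,
    abs_of_nonneg (sub_nonneg.2 hxn)] at this
  linarith

lemma exists_lens_subset_lens_stdUnitVec {x : C₀(ℕ, ℝ)} (hx : ‖x‖ = 1) :
    ∃ k, lens x ⊆ lens (stdUnitVec k) := by
  obtain ⟨k, hk⟩ := exists_norm_apply_eq_norm (f := x) (by rintro rfl; simp at hx)
  refine ⟨k, lens_subset_lens_of_abs_le fun n => ?_⟩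
  rcases eq_or_ne n k with rfl | hnk
  · simp [stdUnitVec_apply, ← Real.norm_eq_abs, hk, hx]
  · simp [stdUnitVec_apply, hnk]

lemma lens_stdUnitVec_subset_iff {i j : ℕ} :
    lens (stdUnitVec j) ⊆ lens (stdUnitVec i) ↔ i = j := by
  refine ⟨fun h => ?_, by rintro rfl; rfl⟩
  have := (lens_subset_lens_iff (norm_stdUnitVec j).le).1 h i
  by_contra hij
  norm_num [stdUnitVec_apply, hij] at this

lemma eq_smul_stdUnitVec {x : C₀(ℕ, ℝ)} {k : ℕ} (h : ∀ n ≠ k, x n = 0) :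
    x = x k • stdUnitVec k := by
  ext n
  rcases eq_or_ne n k with rfl | hnk
  · simp [stdUnitVec_apply]
  · simp [stdUnitVec_apply, hnk, h n hnk]

lemma eq_stdUnitVec_or_neg_of_lens_eq {x : C₀(ℕ, ℝ)} {k : ℕ}
    (h : lens x = lens (stdUnitVec k)) : x = stdUnitVec k ∨ x = -stdUnitVec k := by
  have hle := (lens_subset_lens_iff (norm_stdUnitVec k).le).1 h.ge
  have hx : ‖x‖ ≤ 1 := (norm_le_iff zero_le_one).2 fun n =>
    (hle n).trans (by rw [stdUnitVec_apply]; split_ifs <;> simp)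
  have hge := (lens_subset_lens_iff hx).1 h.le
  have hzero : ∀ n ≠ k, x n = 0 := fun n hnk => by simpa [stdUnitVec_apply, hnk] using hle n
  have hk : |x k| = 1 := by simpa [stdUnitVec_apply] using (hle k).antisymm (hge k)
  rw [eq_smul_stdUnitVec hzero]
  rcases abs_eq zero_le_one |>.1 hk with hk | hk
  · exact .inl (by ext n; simp [hk])
  · exact .inr (by ext n; simp [hk])

/-- A surjective linear isometry of `c₀` maps each standard unit vector to a
standard unit vector up to sign. -/
theorem c0_isometry_unit_vectors (T : C₀(ℕ, ℝ) →ₗ[ℝ] C₀(ℕ, ℝ))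
    (hiso : Isometry T) (hsurj : Function.Surjective T) :
    ∀ j : ℕ, ∃ k : ℕ, T (stdUnitVec j) = stdUnitVec k ∨ T (stdUnitVec j) = -stdUnitVec k := by
  have hT := lens_map_subset_lens_map_iff hiso hsurj
  have norm_T : ∀ x, ‖T x‖ = ‖x‖ := hiso.norm_map_of_map_zero (map_zero T)
  intro j
  obtain ⟨k, hjk⟩ := exists_lens_subset_lens_stdUnitVec (x := T (stdUnitVec j))
    (by rw [norm_T, norm_stdUnitVec])
  obtain ⟨g, hg⟩ := hsurj (stdUnitVec k)
  obtain ⟨i, hgi⟩ := exists_lens_subset_lens_stdUnitVec (x := g)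
    (by rw [← norm_T, hg, norm_stdUnitVec])
  have hjg : lens (stdUnitVec j) ⊆ lens g := (hT _ _).1 (hg ▸ hjk)
  obtain rfl : i = j := lens_stdUnitVec_subset_iff.1 (hjg.trans hgi)
  exact ⟨k, eq_stdUnitVec_or_neg_of_lens_eq (hjk.antisymm (hg ▸ (hT _ _).2 hgi))⟩
end

section
/- Every surjective linear isometry T : ℓ∞ → ℓ∞ has the form T(aₙ) = (εₙ a_{π(n)}) for some signs εₙ ∈ {−1,1} and some permutation π of ℕ. -/
open scoped ENNReal

set_option maxHeartbeats 1000000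
set_option synthInstance.maxHeartbeats 400000

namespace EllInftyAux

noncomputable abbrev E := lp (fun _ : ℕ => ℝ) ∞

noncomputable def e (n : ℕ) : E := lp.single ∞ n (1 : ℝ)

lemma e_apply_self (n : ℕ) : e n n = 1 := lp.single_apply_self ∞ n 1

lemma e_apply_ne {n k : ℕ} (h : k ≠ n) : e n k = 0 := lp.single_apply_ne ∞ n 1 h

lemma abs_e_le (n k : ℕ) : |e n k| ≤ 1 := by
  rcases eq_or_ne k n with rfl | h
  · rw [e_apply_self]; norm_num
  · rw [e_apply_ne h]; norm_num

lemma norm_le_of_coord {x : E} {C : ℝ} (hC : 0 ≤ C) (h : ∀ k, |x k| ≤ C) : ‖x‖ ≤ C :=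
  lp.norm_le_of_forall_le hC fun k => by simpa [Real.norm_eq_abs] using h k

lemma coord_le_norm (x : E) (k : ℕ) : |x k| ≤ ‖x‖ := by
  have := lp.norm_apply_le_norm (ENNReal.top_ne_zero) x k
  rwa [Real.norm_eq_abs] at this

lemma coord_congr {x y : E} (h : x = y) (k : ℕ) : x k = y k := by rw [h]

lemma norm_e (n : ℕ) : ‖e n‖ = 1 := by
  refine le_antisymm (norm_le_of_coord zero_le_one (abs_e_le n)) ?_
  have := coord_le_norm (e n) n
  rw [e_apply_self] at this; simpa using this

lemma key (x : E) (hx : ‖x‖ = 1)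
    (hP : ∀ y : E, ‖y‖ ≤ 1 → ‖x + y‖ ≤ 1 ∨ ‖x - y‖ ≤ 1) :
    ∃ n ε, (ε = (1:ℝ) ∨ ε = -1) ∧ x = ε • e n := by
  -- at most one nonzero coordinate
  have honce : ∀ i j, i ≠ j → x i ≠ 0 → x j = 0 := by
    intro i j hij hxi
    by_contra hxj
    set si : ℝ := if 0 < x i then 1 else -1 with hsi
    set sj : ℝ := if 0 < x j then 1 else -1 with hsj
    have hsi_mul : si * x i = |x i| := by
      rcases lt_trichotomy (x i) 0 with h | h | h
      · simp [hsi, not_lt.mpr h.le, abs_of_neg h]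
      · exact absurd h hxi
      · simp [hsi, h, abs_of_pos h]
    have hsj_mul : sj * x j = |x j| := by
      rcases lt_trichotomy (x j) 0 with h | h | h
      · simp [hsj, not_lt.mpr h.le, abs_of_neg h]
      · exact absurd h hxj
      · simp [hsj, h, abs_of_pos h]
    have hsi_abs : |si| = 1 := by rcases ite_eq_or_eq (0 < x i) (1:ℝ) (-1) with h | h <;>
      rw [hsi, h] <;> norm_num
    have hsj_abs : |sj| = 1 := by rcases ite_eq_or_eq (0 < x j) (1:ℝ) (-1) with h | h <;>
      rw [hsj, h] <;> norm_num
    set y : E := si • e i - sj • e j with hy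
    have hyk : ∀ k, y k = si * e i k - sj * e j k := by
      intro k; simp [hy]; rfl
    have hy1 : ‖y‖ ≤ 1 := by
      refine norm_le_of_coord zero_le_one fun k => ?_
      rw [hyk k]
      rcases eq_or_ne k i with rfl | hki
      · rw [e_apply_self, e_apply_ne hij, mul_zero, sub_zero, mul_one, hsi_abs]
      · rcases eq_or_ne k j with rfl | hkj
        · rw [e_apply_self, e_apply_ne hki, mul_zero, zero_sub, mul_one, abs_neg, hsj_abs]
        · rw [e_apply_ne hki, e_apply_ne hkj]; norm_num
    have hplus : 1 < ‖x + y‖ := by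
      have h1 : (x + y) i = x i + si := by
        have := hyk i
        rw [e_apply_self, e_apply_ne hij, mul_zero, sub_zero, mul_one] at this
        simp [this]
      have h2 : |x i + si| ≤ ‖x + y‖ := h1 ▸ coord_le_norm (x + y) i
      have h3 : si * (x i + si) = |x i| + 1 := by
        have : si * si = 1 := by
          rcases ite_eq_or_eq (0 < x i) (1:ℝ) (-1) with h | h <;> rw [hsi, h] <;> norm_num
        rw [mul_add, hsi_mul, this]
      have h4 : |x i| + 1 ≤ |x i + si| := by
        calc |x i| + 1 = si * (x i + si) := h3.symm
        _ ≤ |si * (x i + si)| := le_abs_self _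
        _ = |si| * |x i + si| := abs_mul _ _
        _ = |x i + si| := by rw [hsi_abs, one_mul]
      have : 0 < |x i| := abs_pos.mpr hxi
      linarith
    have hminus : 1 < ‖x - y‖ := by
      have h1 : (x - y) j = x j + sj := by
        have h0 : y j = - sj := by
          have := hyk j
          rw [e_apply_self, e_apply_ne (Ne.symm hij), mul_zero, zero_sub, mul_one] at this
          exact this
        simp [h0]
      have h2 : |x j + sj| ≤ ‖x - y‖ := h1 ▸ coord_le_norm (x - y) j
      have h3 : sj * (x j + sj) = |x j| + 1 := by
        have : sj * sj = 1 := by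
          rcases ite_eq_or_eq (0 < x j) (1:ℝ) (-1) with h | h <;> rw [hsj, h] <;> norm_num
        rw [mul_add, hsj_mul, this]
      have h4 : |x j| + 1 ≤ |x j + sj| := by
        calc |x j| + 1 = sj * (x j + sj) := h3.symm
        _ ≤ |sj * (x j + sj)| := le_abs_self _
        _ = |sj| * |x j + sj| := abs_mul _ _
        _ = |x j + sj| := by rw [hsj_abs, one_mul]
      have : 0 < |x j| := abs_pos.mpr hxj
      linarith
    rcases hP y hy1 with h | h
    · linarith
    · linarith
  -- there is a nonzero coordinate
  have hex : ∃ n, x n ≠ 0 := by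
    by_contra h
    push_neg at h
    have : ‖x‖ ≤ 0 := norm_le_of_coord le_rfl fun k => by simp [h k]
    rw [hx] at this; linarith
  obtain ⟨n, hn⟩ := hex
  have hzero : ∀ k, k ≠ n → x k = 0 := fun k hk => honce n k (Ne.symm hk) hn
  have hnorm : |x n| = 1 := by
    refine le_antisymm (hx ▸ coord_le_norm x n) ?_
    have : ‖x‖ ≤ |x n| := norm_le_of_coord (abs_nonneg _) fun k => by
      rcases eq_or_ne k n with rfl | hk
      · exact le_rfl
      · rw [hzero k hk]; simp [abs_nonneg]
    linarith [hx ▸ this]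
  refine ⟨n, x n, ?_, ?_⟩
  · rcases (abs_eq zero_le_one).mp hnorm with h | h
    · exact Or.inl h
    · exact Or.inr h
  · apply lp.ext
    funext k
    have : (x n • e n) k = x n * e n k := by simp
    rw [this]
    rcases eq_or_ne k n with rfl | hk
    · rw [e_apply_self, mul_one]
    · rw [e_apply_ne hk, mul_zero, hzero k hk]

lemma bigt (x : E) (n : ℕ) (t : ℝ) (ht : 2 * ‖x‖ ≤ t) :
    ‖x + t • e n‖ = t + x n := by
  have hxn : |x n| ≤ ‖x‖ := coord_le_norm x n
  have hx0 : (0:ℝ) ≤ ‖x‖ := norm_nonneg _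
  have habs : ∀ k, |x k| ≤ ‖x‖ := fun k => coord_le_norm x k
  have h0 : 0 ≤ t + x n := by
    have := abs_le.mp hxn
    linarith
  refine le_antisymm ?_ ?_
  · refine norm_le_of_coord h0 fun k => ?_
    have hk : (x + t • e n) k = x k + t * e n k := by simp; rfl
    rw [hk]
    rcases eq_or_ne k n with rfl | hkn
    · rw [e_apply_self, mul_one, abs_of_nonneg (by linarith), add_comm]
    · rw [e_apply_ne hkn, mul_zero, add_zero]
      have := abs_le.mp (habs k)
      have := abs_le.mp hxn
      rw [abs_le]; constructor <;> linarith
  · have hk : (x + t • e n) n = x n + t := by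
      show x n + t * e n n = _
      rw [e_apply_self, mul_one]
    have := coord_le_norm (x + t • e n) n
    rw [hk] at this
    calc t + x n = |x n + t| := by rw [abs_of_nonneg (by linarith), add_comm]
    _ ≤ _ := this

end EllInftyAux

open EllInftyAux

/-- Every surjective linear isometry of `ℓ∞` is a signed permutation of the
coordinates. -/
theorem ellinfty_isometry_standard
    (T : lp (fun _ : ℕ => ℝ) ∞ →ₗ[ℝ] lp (fun _ : ℕ => ℝ) ∞)
    (hiso : Isometry T) (hsurj : Function.Surjective T) :
    ∃ (ε : ℕ → ℝ) (π : Equiv.Perm ℕ), (∀ n, ε n = 1 ∨ ε n = -1) ∧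
      ∀ (a : lp (fun _ : ℕ => ℝ) ∞) (n : ℕ), (T a) n = ε n * a (π n) := by
  have hT0 : ∀ x : E, ‖T x‖ = ‖x‖ := fun x =>
    hiso.norm_map_of_map_zero (map_zero T) x
  -- P holds for e n
  have Pe : ∀ (n : ℕ) (y : E), ‖y‖ ≤ 1 → ‖e n + y‖ ≤ 1 ∨ ‖e n - y‖ ≤ 1 := by
    intro n y hy
    have habs : ∀ k, |y k| ≤ 1 := fun k => (coord_le_norm y k).trans hy
    rcases le_or_gt 0 (y n) with h | h
    · right
      refine norm_le_of_coord zero_le_one fun k => ?_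
      have hk : (e n - y) k = e n k - y k := by simp
      rw [hk]
      rcases eq_or_ne k n with rfl | hkn
      · rw [e_apply_self]
        have := abs_le.mp (habs k)
        rw [abs_le]; constructor <;> linarith
      · rw [e_apply_ne hkn, zero_sub, abs_neg]; exact habs k
    · left
      refine norm_le_of_coord zero_le_one fun k => ?_
      have hk : (e n + y) k = e n k + y k := by simp
      rw [hk]
      rcases eq_or_ne k n with rfl | hkn
      · rw [e_apply_self]
        have := abs_le.mp (habs k)
        rw [abs_le]; constructor <;> linarith
      · rw [e_apply_ne hkn, zero_add]; exact habs k
  -- T (e n) is a signed unit vector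
  have h1 : ∀ n : ℕ, ∃ k ε, (ε = (1:ℝ) ∨ ε = -1) ∧ T (e n) = ε • e k := by
    intro n
    refine key (T (e n)) (by rw [hT0]; exact norm_e n) fun y hy => ?_
    obtain ⟨z, rfl⟩ := hsurj y
    have hz : ‖z‖ ≤ 1 := by rwa [← hT0]
    have h1 : ‖T (e n) + T z‖ = ‖e n + z‖ := by rw [← map_add, hT0]
    have h2 : ‖T (e n) - T z‖ = ‖e n - z‖ := by rw [← map_sub, hT0]
    rcases Pe n z hz with h | h
    · exact Or.inl (h1 ▸ h)
    · exact Or.inr (h2 ▸ h)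
  choose σ ε' hε' hTe using h1
  have hεsq : ∀ n, ε' n * ε' n = 1 := by
    intro n; rcases hε' n with h | h <;> rw [h] <;> norm_num
  have hεne : ∀ n, ε' n ≠ 0 := by
    intro n; rcases hε' n with h | h <;> rw [h] <;> norm_num
  have hinj : Function.Injective σ := by
    intro n m h
    by_contra hnm
    have e1 : T (ε' m • e n) = (ε' m * ε' n) • e (σ n) := by
      rw [map_smul, hTe n, smul_smul]
    have e2 : T (ε' n • e m) = (ε' n * ε' m) • e (σ n) := by
      rw [map_smul, hTe m, smul_smul, h]
    have : T (ε' m • e n) = T (ε' n • e m) := by rw [e1, e2, mul_comm]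
    have heq : (ε' m • e n : E) = ε' n • e m := hiso.injective this
    have h3 := coord_congr heq n
    have h4 : (ε' m • e n : E) n = ε' m * e n n := by simp
    have h5 : (ε' n • e m : E) n = ε' n * e m n := by simp
    rw [h4, h5, e_apply_self, e_apply_ne hnm, mul_one, mul_zero] at h3
    exact hεne m h3
  have hsurjσ : Function.Surjective σ := by
    intro m
    obtain ⟨b, hb⟩ := hsurj (e m)
    have hbn : ‖b‖ = 1 := by rw [← hT0, hb]; exact norm_e m
    have hPb : ∀ y : E, ‖y‖ ≤ 1 → ‖b + y‖ ≤ 1 ∨ ‖b - y‖ ≤ 1 := by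
      intro y hy
      have hy' : ‖T y‖ ≤ 1 := by rwa [hT0]
      have h1 : ‖b + y‖ = ‖e m + T y‖ := by rw [← hb, ← map_add, hT0]
      have h2 : ‖b - y‖ = ‖e m - T y‖ := by rw [← hb, ← map_sub, hT0]
      rcases Pe m (T y) hy' with h | h
      · exact Or.inl (h1 ▸ h)
      · exact Or.inr (h2 ▸ h)
    obtain ⟨k, δ, hδ, hbk⟩ := key b hbn hPb
    refine ⟨k, ?_⟩
    have h1 : (e m : E) = (δ * ε' k) • e (σ k) := by
      rw [← hb, hbk, map_smul, hTe k, smul_smul]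
    have h2 := coord_congr h1 m
    have h4 : ((δ * ε' k) • e (σ k) : E) m = (δ * ε' k) * e (σ k) m := by simp
    rw [h4, e_apply_self] at h2
    by_contra hkm
    rw [e_apply_ne (fun hh => hkm hh.symm), mul_zero] at h2
    exact one_ne_zero h2
  let π : Equiv.Perm ℕ := (Equiv.ofBijective σ ⟨hinj, hsurjσ⟩).symm
  have hπ : ∀ m, σ (π m) = m := fun m =>
    (Equiv.ofBijective σ ⟨hinj, hsurjσ⟩).apply_symm_apply m
  refine ⟨fun m => ε' (π m), π, fun m => hε' (π m), ?_⟩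
  intro a m
  set n := π m with hn
  have hσn : σ n = m := hπ m
  set t : ℝ := 2 * ‖a‖ + 1 with hts
  have ht : 2 * ‖a‖ ≤ t := by linarith
  have hL : ‖a + t • e n‖ = t + a n := bigt a n t ht
  have hTnorm : ‖T a + (t * ε' n) • e m‖ = t + a n := by
    rw [← hL, ← hT0 (a + t • e n), map_add, map_smul, hTe n, hσn, smul_smul]
  rcases hε' n with h | h
  · rw [h, mul_one] at hTnorm
    have : ‖T a + t • e m‖ = t + (T a) m := by
      refine bigt (T a) m t ?_
      rw [hT0]; exact ht
    rw [this] at hTnorm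
    show (T a) m = ε' (π m) * a (π m)
    rw [← hn, h, one_mul]
    linarith
  · rw [h] at hTnorm
    have hneg : (T a + (t * (-1)) • e m : E) = -((-(T a)) + t • e m) := by
      rw [mul_neg_one, neg_smul, neg_add, neg_neg]
    rw [hneg, norm_neg] at hTnorm
    have : ‖(-(T a) : E) + t • e m‖ = t + (-(T a)) m := by
      refine bigt (-(T a)) m t ?_
      rw [norm_neg, hT0]; exact ht
    rw [this] at hTnorm
    have hc : ((-(T a) : E)) m = -((T a) m) := by simp
    rw [hc] at hTnorm
    show (T a) m = ε' (π m) * a (π m)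
    rw [← hn, h]
    linarith
end

section
/- For every n ≥ 2, the vector e₁ + eₙ is an extreme point of the closed unit ball of the Schreier space X_{S₁}. -/
/-!
The coordinate functionals extend continuously to the completion, and the inequality
`∑ k ∈ F, |y k| ≤ ‖y‖` for `F ∈ S₁` survives there by density; it also shows that the
coordinates separate points of the completion. If `e₀ + eₙ` lies inside a segment `[y, z]` of
the unit ball, then `y₀ = yₙ = 1` because coordinates have norm at most `1`. For every other
`k ≥ 1` the pair `{n, k}` is admissible, so `1 + |y_k| ≤ ‖y‖ ≤ 1` forces `y_k = 0`; hence
`y = e₀ + eₙ`.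
-/

/-- The (0-indexed) Schreier family `S₁`: finite sets `F ⊆ ℕ` with `card F ≤ min F + 1`. -/
def SchreierAdm : Set (Finset ℕ) := {F | ∀ n ∈ F, F.card ≤ n + 1}

instance : Nonempty SchreierAdm := ⟨⟨∅, fun n hn => by simp at hn⟩⟩

lemma sum_abs_le_support (f : ℕ →₀ ℝ) (F : Finset ℕ) :
    ∑ k ∈ F, |f k| ≤ ∑ k ∈ f.support, |f k| := by
  calc ∑ k ∈ F, |f k| = ∑ k ∈ F ∩ f.support, |f k| := by
        refine (Finset.sum_subset Finset.inter_subset_left fun x hx hx' => ?_).symm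
        have : f x = 0 := by
          by_contra h
          exact hx' (Finset.mem_inter.2 ⟨hx, Finsupp.mem_support_iff.2 h⟩)
        simp [this]
    _ ≤ ∑ k ∈ f.support, |f k| :=
        Finset.sum_le_sum_of_subset_of_nonneg Finset.inter_subset_right
          fun _ _ _ => abs_nonneg _

/-- The Schreier norm `‖f‖ = sup_{F ∈ S₁} ∑_{k ∈ F} |f k|` on `c₀₀ = ℕ →₀ ℝ`. -/
noncomputable def schreierNorm (f : ℕ →₀ ℝ) : ℝ :=
  ⨆ F : SchreierAdm, ∑ k ∈ F.1, |f k|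

lemma schreierNorm_bdd (f : ℕ →₀ ℝ) :
    BddAbove (Set.range fun F : SchreierAdm => ∑ k ∈ F.1, |f k|) := by
  refine ⟨∑ k ∈ f.support, |f k|, ?_⟩
  rintro r ⟨F, rfl⟩
  exact sum_abs_le_support f F.1

/-- The Schreier norm as an `AddGroupNorm` on `c₀₀`. -/
noncomputable def schreierAGN : AddGroupNorm (ℕ →₀ ℝ) where
  toFun := schreierNorm
  map_zero' := by simp [schreierNorm]
  add_le' f g := by
    refine ciSup_le fun F => ?_
    calc ∑ k ∈ F.1, |(f + g) k| ≤ ∑ k ∈ F.1, (|f k| + |g k|) :=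
          Finset.sum_le_sum fun k _ => by simpa using abs_add_le (f k) (g k)
      _ = ∑ k ∈ F.1, |f k| + ∑ k ∈ F.1, |g k| := Finset.sum_add_distrib
      _ ≤ schreierNorm f + schreierNorm g :=
          add_le_add (le_ciSup (schreierNorm_bdd f) F) (le_ciSup (schreierNorm_bdd g) F)
  neg' f := by simp [schreierNorm]
  eq_zero_of_map_eq_zero' f hf := by
    ext n
    have hmem : ({n} : Finset ℕ) ∈ SchreierAdm := by
      intro m hm
      simp only [Finset.card_singleton]
      omega
    have h1 : |f n| ≤ schreierNorm f := by
      unfold schreierNorm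
      simpa using le_ciSup (schreierNorm_bdd f) (⟨{n}, hmem⟩ : SchreierAdm)
    have : |f n| = 0 := le_antisymm (hf ▸ h1) (abs_nonneg _)
    simpa using abs_eq_zero.mp this

/-- `c₀₀` equipped with the Schreier norm. -/
noncomputable instance : NormedAddCommGroup (ℕ →₀ ℝ) :=
  AddGroupNorm.toNormedAddCommGroup schreierAGN

noncomputable instance : NormedSpace ℝ (ℕ →₀ ℝ) := by
  refine ⟨fun c f => ?_⟩
  have key : ∀ F : SchreierAdm, ∑ k ∈ F.1, |(c • f) k| = |c| * ∑ k ∈ F.1, |f k| := by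
    intro F
    rw [Finset.mul_sum]
    exact Finset.sum_congr rfl fun k _ => by simp [abs_mul]
  show schreierNorm (c • f) ≤ ‖c‖ * schreierNorm f
  refine ciSup_le fun F => ?_
  rw [key F, Real.norm_eq_abs]
  exact mul_le_mul_of_nonneg_left (le_ciSup (schreierNorm_bdd f) F) (abs_nonneg c)

/-- The Schreier space `X_{S₁}`: the completion of `c₀₀` in the Schreier norm. -/
noncomputable abbrev SchreierSpace := UniformSpace.Completion (ℕ →₀ ℝ)

open UniformSpace Completion

lemma singleton_mem_schreierAdm (k : ℕ) : ({k} : Finset ℕ) ∈ SchreierAdm := by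
  intro m _
  simp

lemma pair_mem_schreierAdm {i j : ℕ} (hi : 1 ≤ i) (hj : 1 ≤ j) :
    ({i, j} : Finset ℕ) ∈ SchreierAdm := by
  intro m hm
  have : ({i, j} : Finset ℕ).card ≤ 2 := Finset.card_le_two
  simp only [Finset.mem_insert, Finset.mem_singleton] at hm
  omega

lemma sum_abs_le_norm_of_mem_schreierAdm {F : Finset ℕ} (hF : F ∈ SchreierAdm)
    (f : ℕ →₀ ℝ) : ∑ k ∈ F, |f k| ≤ ‖f‖ :=
  le_ciSup (schreierNorm_bdd f) ⟨F, hF⟩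

lemma norm_single_zero_add_single_le_one {n : ℕ} (hn : 1 ≤ n) :
    ‖(Finsupp.single 0 (1 : ℝ) + Finsupp.single n 1 : ℕ →₀ ℝ)‖ ≤ 1 := by
  refine ciSup_le fun ⟨F, hF⟩ => ?_
  have hsum : ∑ k ∈ F, |(Finsupp.single 0 (1 : ℝ) + Finsupp.single n 1 : ℕ →₀ ℝ) k|
      = (if 0 ∈ F then 1 else 0) + (if n ∈ F then 1 else 0) := by
    rw [← Finset.sum_ite_eq F 0 fun _ => (1 : ℝ), ← Finset.sum_ite_eq F n fun _ => (1 : ℝ),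
      ← Finset.sum_add_distrib]
    refine Finset.sum_congr rfl fun k _ => ?_
    simp only [Finsupp.add_apply, Finsupp.single_apply]
    split_ifs <;> norm_num
  rw [hsum]
  by_cases h0 : 0 ∈ F
  · have hnF : n ∉ F := fun h => by
      have := Finset.one_lt_card.2 ⟨0, h0, n, h, by omega⟩
      have := hF 0 h0
      omega
    simp [h0, hnF]
  · split_ifs <;> norm_num [h0]

namespace SchreierSpace

noncomputable def coord (k : ℕ) : SchreierSpace →L[ℝ] ℝ :=
  ((Finsupp.lapply k).mkContinuous 1 fun f => by
    simpa using sum_abs_le_norm_of_mem_schreierAdm (singleton_mem_schreierAdm k) f).extend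
    toComplL

@[simp]
lemma coord_coe (k : ℕ) (f : ℕ →₀ ℝ) : coord k f = f k :=
  ContinuousLinearMap.extend_eq _ (by simpa using denseRange_coe)
    (isUniformInducing_coe _) f

lemma sum_abs_coord_le_norm {F : Finset ℕ} (hF : F ∈ SchreierAdm) (y : SchreierSpace) :
    ∑ k ∈ F, |coord k y| ≤ ‖y‖ := by
  induction y using induction_on with
  | hp => exact isClosed_le (by fun_prop) continuous_norm
  | ih f => simpa using sum_abs_le_norm_of_mem_schreierAdm hF f

lemma abs_coord_le_norm (k : ℕ) (y : SchreierSpace) : |coord k y| ≤ ‖y‖ := by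
  simpa using sum_abs_coord_le_norm (singleton_mem_schreierAdm k) y

lemma eq_zero_of_coord_eq_zero {w : SchreierSpace} (hw : ∀ k, coord k w = 0) : w = 0 := by
  have key : ∀ v : SchreierSpace, ‖v‖ ≤ ‖v - w‖ := by
    intro v
    induction v using induction_on with
    | hp => exact isClosed_le continuous_norm (by fun_prop)
    | ih f =>
      refine (norm_coe f).trans_le (ciSup_le fun ⟨F, hF⟩ => ?_)
      simpa [hw] using sum_abs_coord_le_norm hF (f - w)
  simpa using key w

lemma ext {y z : SchreierSpace} (h : ∀ k, coord k y = coord k z) : y = z :=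
  sub_eq_zero.1 <| eq_zero_of_coord_eq_zero fun k => by simp [h k]

lemma coord_eq_zero_of_coord_eq_one {y : SchreierSpace} (hy : ‖y‖ ≤ 1) {n : ℕ} (hn : 1 ≤ n)
    (hyn : coord n y = 1) {k : ℕ} (hk : 1 ≤ k) (hkn : k ≠ n) : coord k y = 0 := by
  have := sum_abs_coord_le_norm (pair_mem_schreierAdm hn hk) y
  rw [Finset.sum_pair hkn.symm, hyn, abs_one] at this
  exact abs_nonpos_iff.1 (by linarith)

end SchreierSpace

lemma LinearMap.eq_of_mem_openSegment_of_le {E : Type*} [AddCommGroup E] [Module ℝ E]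
    (φ : E →ₗ[ℝ] ℝ) {x y z : E} {c : ℝ} (hy : φ y ≤ c) (hz : φ z ≤ c)
    (hx : x ∈ openSegment ℝ y z) (hφx : φ x = c) : φ y = c := by
  obtain ⟨a, b, ha, hb, hab, rfl⟩ := hx
  simp only [map_add, map_smul, smul_eq_mul] at hφx
  refine le_antisymm hy (le_of_not_gt fun hlt => ?_)
  have hc : a * c + b * c = c := by rw [← add_mul, hab, one_mul]
  linarith [mul_lt_mul_of_pos_left hlt ha, mul_le_mul_of_nonneg_left hz hb.le]

open SchreierSpace in
/-- For every `n ≥ 1` (`n ≥ 2` in 1-indexed notation), `e₀ + eₙ` is an extreme point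
of the closed unit ball of the Schreier space. -/
theorem schreier_extreme_point (n : ℕ) (hn : 1 ≤ n) :
    ((Finsupp.single 0 (1 : ℝ) + Finsupp.single n 1 : ℕ →₀ ℝ) : SchreierSpace) ∈
      Set.extremePoints ℝ (Metric.closedBall (0 : SchreierSpace) 1) := by
  set x : ℕ →₀ ℝ := Finsupp.single 0 (1 : ℝ) + Finsupp.single n 1 with hx
  refine ⟨by simpa using norm_single_zero_add_single_le_one hn, fun y hy z hz hxyz => ?_⟩
  rw [mem_closedBall_zero_iff] at hy hz
  have hcoord_one : ∀ k, x k = 1 → coord k y = 1 := fun k hk =>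
    (coord k).toLinearMap.eq_of_mem_openSegment_of_le
      ((le_abs_self _).trans ((abs_coord_le_norm k y).trans hy))
      ((le_abs_self _).trans ((abs_coord_le_norm k z).trans hz)) hxyz (by simpa using hk)
  have hn0 : n ≠ 0 := by omega
  have hyn : coord n y = 1 := hcoord_one n (by simp [hx, hn0])
  refine SchreierSpace.ext fun k => ?_
  rcases Nat.eq_zero_or_pos k with rfl | hk
  · simpa [hx, hn0] using hcoord_one 0 (by simp [hx, hn0.symm])
  by_cases hkn : k = n
  · subst hkn
    simpa [hx, hn0] using hyn
  · simp [coord_eq_zero_of_coord_eq_one hy hn hyn hk hkn, hx, hkn, hk.ne']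
end
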